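/- arXiv:2301.04876 — 7 statements merged into one kernel-verified Lean document; each statement's English description precedes it below -/
import Mathlib

section
/- Under random assignment and one-sided noncompliance for both treatments, the Wald estimand δ_{A0} = (E[Y|Z_A=1,Z_B=0] − E[Y|Z_A=0,Z_B=0]) / (E[D_A|Z_A=1,Z_B=0] − E[D_A|Z_A=0,Z_B=0]) equals E[Y(1,0) − Y(0,0) | D_A(1,0)=1], the average effect of treatment A alone among units with D_A(1,0)=1 (self-compliers and cross-defiers). -/
open MeasureTheory ProbabilityTheory

/-- Conditional expectation of `X` given the event `E`: `E[X · 1_E] / P(E)`. -/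
noncomputable def cexp {Ω : Type*} [MeasurableSpace Ω] (μ : Measure Ω) (X : Ω → ℝ) (E : Set Ω) : ℝ :=
  (∫ ω in E, X ω ∂μ) / (μ E).toReal

/-!
On the cell `Z = (1,0)` one-sided noncompliance switches `B` off, so the observed outcome is
`Y(0,0) + D_A(1,0) (Y(1,0) - Y(0,0))`; on the cell `Z = (0,0)` both treatments are off and it is
`Y(0,0)`. Random assignment makes each of these potential quantities independent of the cell,
so conditioning on the cell does not change their means, and the Wald ratio becomes
`E[D_A(1,0) (Y(1,0) - Y(0,0))] / P(D_A(1,0) = 1)`.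
-/

lemma apply_eq_add_mul_sub_of_zero_or_one {R : Type*} [CommRing R] {d : R} (hd : d = 0 ∨ d = 1)
    (f : R → R) : f d = f 0 + d * (f 1 - f 0) := by
  rcases hd with rfl | rfl <;> ring

section ZeroOrOne

variable {Ω : Type*} {D : Ω → ℝ}

lemma mul_eq_indicator_of_zero_or_one (hD : ∀ ω, D ω = 0 ∨ D ω = 1) (G : Ω → ℝ) :
    (fun ω => D ω * G ω) = {ω | D ω = 1}.indicator G := by
  ext ω
  rcases hD ω with h | h <;> simp [h]

lemma integral_eq_measureReal_of_zero_or_one [MeasurableSpace Ω] {μ : Measure Ω}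
    (hD : ∀ ω, D ω = 0 ∨ D ω = 1) (hDm : MeasurableSet {ω | D ω = 1}) :
    ∫ ω, D ω ∂μ = μ.real {ω | D ω = 1} := by
  have hind : D = {ω | D ω = 1}.indicator 1 := by
    simpa using mul_eq_indicator_of_zero_or_one hD 1
  exact (congrArg (fun f => ∫ ω, f ω ∂μ) hind).trans (integral_indicator_one hDm)

end ZeroOrOne

lemma cexp_preimage_eq_integral_of_indepFun {Ω β : Type*} [MeasurableSpace Ω] [MeasurableSpace β]
    {μ : Measure Ω} [IsFiniteMeasure μ] {V : Ω → β} {X F : Ω → ℝ} {s : Set β}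
    (hV : Measurable V) (hs : MeasurableSet s) (hμ : μ (V ⁻¹' s) ≠ 0) (hF : AEMeasurable F μ)
    (hVF : IndepFun V F μ) (hXF : Set.EqOn X F (V ⁻¹' s)) :
    cexp μ X (V ⁻¹' s) = ∫ ω, F ω ∂μ := by
  have hsplit : ∫ ω in V ⁻¹' s, F ω ∂μ = μ.real (V ⁻¹' s) * ∫ ω, F ω ∂μ :=
    ((IndepFun_iff_Indep V F μ).1 hVF).setIntegral_eq_mul hV.comap_le hF ⟨s, hs, rfl⟩
      aestronglyMeasurable_id
  rw [cexp, setIntegral_congr_fun (hV hs) hXF, hsplit, ← measureReal_def]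
  exact mul_div_cancel_left₀ _ ((measureReal_ne_zero_iff (measure_ne_top μ _)).2 hμ)

lemma cexp_cell_eq_integral_of_indepFun {Ω : Type*} [MeasurableSpace Ω] {μ : Measure Ω}
    [IsFiniteMeasure μ] {A B X F : Ω → ℝ} (hA : Measurable A) (hB : Measurable B) {a b : ℝ}
    (hμ : μ {ω | A ω = a ∧ B ω = b} ≠ 0) (hF : AEMeasurable F μ)
    (hABF : IndepFun (fun ω => (A ω, B ω)) F μ) (hXF : ∀ ω, A ω = a → B ω = b → X ω = F ω) :
    cexp μ X {ω | A ω = a ∧ B ω = b} = ∫ ω, F ω ∂μ :=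
  cexp_preimage_eq_integral_of_indepFun (s := {p : ℝ × ℝ | p.1 = a ∧ p.2 = b}) (hA.prodMk hB)
    ((measurableSet_singleton a).preimage measurable_fst |>.inter
      ((measurableSet_singleton b).preimage measurable_snd))
    hμ hF hABF fun ω h => hXF ω h.1 h.2

theorem stmt_5_general {Ω : Type*} [MeasurableSpace Ω] (μ : Measure Ω) [IsProbabilityMeasure μ]
    (ZA ZB : Ω → ℝ) (DA DB : ℝ → ℝ → Ω → ℝ) (Y : ℝ → ℝ → Ω → ℝ)
    (DAobs DBobs Yobs : Ω → ℝ)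
    (hZAm : Measurable ZA) (hZBm : Measurable ZB)
    (hDAm : ∀ z1 z2 : ℝ, (z1 = 0 ∨ z1 = 1) → (z2 = 0 ∨ z2 = 1) → Measurable (DA z1 z2))
    (hDAbin : ∀ z1 z2 : ℝ, (z1 = 0 ∨ z1 = 1) → (z2 = 0 ∨ z2 = 1) →
      ∀ ω, DA z1 z2 ω = 0 ∨ DA z1 z2 ω = 1)
    (hYint : ∀ d1 d2 : ℝ, (d1 = 0 ∨ d1 = 1) → (d2 = 0 ∨ d2 = 1) → Integrable (Y d1 d2) μ)
    (hDAobs : ∀ ω, DAobs ω = DA (ZA ω) (ZB ω) ω)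
    (hDBobs : ∀ ω, DBobs ω = DB (ZA ω) (ZB ω) ω)
    (hYobs : ∀ ω, Yobs ω = Y (DAobs ω) (DBobs ω) ω)
    (hindep : IndepFun (fun ω => (ZA ω, ZB ω))
      (fun ω => (Y 0 0 ω, Y 0 1 ω, Y 1 0 ω, Y 1 1 ω,
        DA 0 0 ω, DA 0 1 ω, DA 1 0 ω, DA 1 1 ω,
        DB 0 0 ω, DB 0 1 ω, DB 1 0 ω, DB 1 1 ω)) μ)
    (honcA : ∀ z : ℝ, (z = 0 ∨ z = 1) → ∀ ω, DA 0 z ω = 0)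
    (honcB : ∀ z : ℝ, (z = 0 ∨ z = 1) → ∀ ω, DB z 0 ω = 0)
    (hz10 : 0 < μ {ω | ZA ω = 1 ∧ ZB ω = 0})
    (hz00 : 0 < μ {ω | ZA ω = 0 ∧ ZB ω = 0}) :
    (cexp μ Yobs {ω | ZA ω = 1 ∧ ZB ω = 0} - cexp μ Yobs {ω | ZA ω = 0 ∧ ZB ω = 0}) /
        (cexp μ DAobs {ω | ZA ω = 1 ∧ ZB ω = 0} - cexp μ DAobs {ω | ZA ω = 0 ∧ ZB ω = 0}) =
      cexp μ (fun ω => Y 1 0 ω - Y 0 0 ω) {ω | DA 1 0 ω = 1} := by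
  have hD := hDAbin 1 0 (.inr rfl) (.inl rfl)
  have hS : MeasurableSet {ω | DA 1 0 ω = 1} :=
    hDAm 1 0 (.inr rfl) (.inl rfl) (measurableSet_singleton 1)
  have hY00 := hYint 0 0 (.inl rfl) (.inl rfl)
  have hGint : Integrable (fun ω => DA 1 0 ω * (Y 1 0 ω - Y 0 0 ω)) μ := by
    rw [mul_eq_indicator_of_zero_or_one hD]
    exact ((hYint 1 0 (.inr rfl) (.inl rfl)).sub hY00).indicator hS
  have hZ : IndepFun (fun ω => (ZA ω, ZB ω)) (fun ω => (Y 0 0 ω, Y 1 0 ω, DA 1 0 ω)) μ :=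
    hindep.comp measurable_id (ψ := fun p : ℝ × ℝ × ℝ × ℝ × ℝ × ℝ × ℝ × ℝ × ℝ × ℝ × ℝ × ℝ =>
      (p.1, p.2.2.1, p.2.2.2.2.2.2.1)) (by fun_prop)
  have hYobs10 : cexp μ Yobs {ω | ZA ω = 1 ∧ ZB ω = 0} =
      ∫ ω, (Y 0 0 ω + DA 1 0 ω * (Y 1 0 ω - Y 0 0 ω)) ∂μ :=
    cexp_cell_eq_integral_of_indepFun hZAm hZBm hz10.ne' (hY00.add hGint).aemeasurable
      (hZ.comp measurable_id (ψ := fun p : ℝ × ℝ × ℝ => p.1 + p.2.2 * (p.2.1 - p.1))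
        (by fun_prop)) fun ω hA hB => by
      rw [hYobs, hDBobs, hDAobs, hA, hB, honcB 1 (.inr rfl)]
      exact apply_eq_add_mul_sub_of_zero_or_one (hD ω) (Y · 0 ω)
  have hYobs00 : cexp μ Yobs {ω | ZA ω = 0 ∧ ZB ω = 0} = ∫ ω, Y 0 0 ω ∂μ :=
    cexp_cell_eq_integral_of_indepFun hZAm hZBm hz00.ne' hY00.aemeasurable
      (hZ.comp measurable_id measurable_fst) fun ω hA hB => by
      rw [hYobs, hDBobs, hDAobs, hA, hB, honcB 0 (.inl rfl), honcA 0 (.inl rfl)]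
  have hDAobs10 : cexp μ DAobs {ω | ZA ω = 1 ∧ ZB ω = 0} = μ.real {ω | DA 1 0 ω = 1} :=
    (cexp_cell_eq_integral_of_indepFun hZAm hZBm hz10.ne'
      (hDAm 1 0 (.inr rfl) (.inl rfl)).aemeasurable
      (hZ.comp measurable_id (measurable_snd.comp measurable_snd))
      fun ω hA hB => by rw [hDAobs, hA, hB]).trans
    (integral_eq_measureReal_of_zero_or_one hD hS)
  have hDAobs00 : cexp μ DAobs {ω | ZA ω = 0 ∧ ZB ω = 0} = 0 := by
    rw [cexp, setIntegral_eq_zero_of_forall_eq_zero, zero_div]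
    rintro ω ⟨hA, hB⟩
    rw [hDAobs, hA, hB, honcA 0 (.inl rfl)]
  rw [hYobs10, hYobs00, hDAobs10, hDAobs00, integral_add hY00 hGint,
    mul_eq_indicator_of_zero_or_one hD, integral_indicator hS, cexp, measureReal_def]
  ring

theorem stmt_5 {Ω : Type*} [MeasurableSpace Ω] (μ : Measure Ω) [IsProbabilityMeasure μ]
    (ZA ZB : Ω → ℝ) (DA DB : ℝ → ℝ → Ω → ℝ) (Y : ℝ → ℝ → Ω → ℝ)
    (DAobs DBobs Yobs : Ω → ℝ)
    (hZAm : Measurable ZA) (hZBm : Measurable ZB)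
    (hZAbin : ∀ ω, ZA ω = 0 ∨ ZA ω = 1) (hZBbin : ∀ ω, ZB ω = 0 ∨ ZB ω = 1)
    (hDAm : ∀ z1 z2 : ℝ, (z1 = 0 ∨ z1 = 1) → (z2 = 0 ∨ z2 = 1) → Measurable (DA z1 z2))
    (hDBm : ∀ z1 z2 : ℝ, (z1 = 0 ∨ z1 = 1) → (z2 = 0 ∨ z2 = 1) → Measurable (DB z1 z2))
    (hDAbin : ∀ z1 z2 : ℝ, (z1 = 0 ∨ z1 = 1) → (z2 = 0 ∨ z2 = 1) →
      ∀ ω, DA z1 z2 ω = 0 ∨ DA z1 z2 ω = 1)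
    (hDBbin : ∀ z1 z2 : ℝ, (z1 = 0 ∨ z1 = 1) → (z2 = 0 ∨ z2 = 1) →
      ∀ ω, DB z1 z2 ω = 0 ∨ DB z1 z2 ω = 1)
    (hYm : ∀ d1 d2 : ℝ, (d1 = 0 ∨ d1 = 1) → (d2 = 0 ∨ d2 = 1) → Measurable (Y d1 d2))
    (hYint : ∀ d1 d2 : ℝ, (d1 = 0 ∨ d1 = 1) → (d2 = 0 ∨ d2 = 1) → Integrable (Y d1 d2) μ)
    (hDAobs : ∀ ω, DAobs ω = DA (ZA ω) (ZB ω) ω)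
    (hDBobs : ∀ ω, DBobs ω = DB (ZA ω) (ZB ω) ω)
    (hYobs : ∀ ω, Yobs ω = Y (DAobs ω) (DBobs ω) ω)
    (hindep : IndepFun (fun ω => (ZA ω, ZB ω))
      (fun ω => (Y 0 0 ω, Y 0 1 ω, Y 1 0 ω, Y 1 1 ω,
        DA 0 0 ω, DA 0 1 ω, DA 1 0 ω, DA 1 1 ω,
        DB 0 0 ω, DB 0 1 ω, DB 1 0 ω, DB 1 1 ω)) μ)
    (honcA : ∀ z : ℝ, (z = 0 ∨ z = 1) → ∀ ω, DA 0 z ω = 0)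
    (honcB : ∀ z : ℝ, (z = 0 ∨ z = 1) → ∀ ω, DB z 0 ω = 0)
    (hz10 : 0 < μ {ω | ZA ω = 1 ∧ ZB ω = 0})
    (hz00 : 0 < μ {ω | ZA ω = 0 ∧ ZB ω = 0})
    (hfs : 0 < μ {ω | DA 1 0 ω = 1}) :
    (cexp μ Yobs {ω | ZA ω = 1 ∧ ZB ω = 0} - cexp μ Yobs {ω | ZA ω = 0 ∧ ZB ω = 0}) /
        (cexp μ DAobs {ω | ZA ω = 1 ∧ ZB ω = 0} - cexp μ DAobs {ω | ZA ω = 0 ∧ ZB ω = 0}) =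
      cexp μ (fun ω => Y 1 0 ω - Y 0 0 ω) {ω | DA 1 0 ω = 1} :=
  stmt_5_general μ ZA ZB DA DB Y DAobs DBobs Yobs hZAm hZBm hDAm hDAbin hYint hDAobs hDBobs hYobs
    hindep honcA honcB hz10 hz00
end

section
/- (General decomposition of the reduced-form contrast.) Fix z∈{0,1}. Under the IV independence assumption, E[Y | Z_A=1,Z_B=z] − E[Y | Z_A=0,Z_B=z] = E[Δ_{A|B̄}·(D_A(1,z)−D_A(0,z))] + E[Δ_{B|Ā}·(D_B(1,z)−D_B(0,z))] + E[(Δ_{A|B}−Δ_{A|B̄})·(D_A(1,z)D_B(1,z)−D_A(0,z)D_B(0,z))], where Δ_{A|B̄}=Y(1,0)−Y(0,0), Δ_{B|Ā}=Y(0,1)−Y(0,0), Δ_{A|B}=Y(1,1)−Y(0,1). -/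
/-!
On the event `{Z_A = a, Z_B = z}` the observed outcome equals the realized outcome
`W_a = Y(D_A(a,z), D_B(a,z))`, written through the switching equation. `W_a` is a measurable
function of the vector of potential outcomes and potential treatments, which is independent of the
instruments; hence `∫_{Z = (a,z)} Y = P(Z = (a,z)) · E[W_a]`, so the conditional mean of `Y` given
`Z = (a,z)` is the unconditional mean `E[W_a]`. The decomposition is then the linearity of
`E[W_1 - W_0]`, all terms being integrable because treatments take values in `[0, 1]`.
-/

open MeasureTheory ProbabilityTheory

open Set

section

variable {Ω : Type*}

def realizedOutcome (Y : ℝ → ℝ → Ω → ℝ) (dA dB : Ω → ℝ) (ω : Ω) : ℝ :=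
  Y 0 0 ω + (Y 1 0 ω - Y 0 0 ω) * dA ω + (Y 0 1 ω - Y 0 0 ω) * dB ω +
    ((Y 1 1 ω - Y 0 1 ω) - (Y 1 0 ω - Y 0 0 ω)) * (dA ω * dB ω)

def potentialVector (Y DA DB : ℝ → ℝ → Ω → ℝ) (ω : Ω) :
    ℝ × ℝ × ℝ × ℝ × ℝ × ℝ × ℝ × ℝ × ℝ × ℝ × ℝ × ℝ :=
  (Y 0 0 ω, Y 0 1 ω, Y 1 0 ω, Y 1 1 ω,
    DA 0 0 ω, DA 0 1 ω, DA 1 0 ω, DA 1 1 ω,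
    DB 0 0 ω, DB 0 1 ω, DB 1 0 ω, DB 1 1 ω)

lemma cexp_eq_integral_of_indep {m mG mΩ : MeasurableSpace Ω} {μ : Measure Ω}
    [IsFiniteMeasure μ] (hm : m ≤ mΩ) (hind : Indep m mG μ) {F G : Ω → ℝ}
    (hGm : Measurable[mG] G) (hG : AEMeasurable G μ)
    {E : Set Ω} (hE : MeasurableSet[m] E) (hμE : μ E ≠ 0) (hFG : EqOn F G E) :
    cexp μ F E = ∫ ω, G ω ∂μ := by
  have hindG : Indep m (.comap G inferInstance) μ := indep_of_indep_of_le_right hind hGm.comap_le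
  have hsplit : ∫ ω in E, G ω ∂μ = μ.real E * ∫ ω, G ω ∂μ :=
    hindG.setIntegral_eq_mul (f := id) hm hG hE aestronglyMeasurable_id
  have hμE' : μ.real E ≠ 0 := (measureReal_ne_zero_iff).2 hμE
  unfold cexp
  rw [setIntegral_congr_fun (hm E hE) hFG, hsplit, ← Measure.real]
  field_simp

lemma measurable_realizedOutcome {m : MeasurableSpace Ω} {Y : ℝ → ℝ → Ω → ℝ} {dA dB : Ω → ℝ}
    (hY : ∀ d1 d2 : ℝ, (d1 = 0 ∨ d1 = 1) → (d2 = 0 ∨ d2 = 1) → Measurable[m] (Y d1 d2))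
    (hdA : Measurable[m] dA) (hdB : Measurable[m] dB) :
    Measurable[m] (realizedOutcome Y dA dB) := by
  have := hY 0 0 (.inl rfl) (.inl rfl)
  have := hY 0 1 (.inl rfl) (.inr rfl)
  have := hY 1 0 (.inr rfl) (.inl rfl)
  have := hY 1 1 (.inr rfl) (.inr rfl)
  unfold realizedOutcome
  fun_prop

lemma measurable_comap_potentialVector (Y DA DB : ℝ → ℝ → Ω → ℝ) {d1 d2 : ℝ}
    (hd1 : d1 = 0 ∨ d1 = 1) (hd2 : d2 = 0 ∨ d2 = 1) :
    Measurable[.comap (potentialVector Y DA DB) inferInstance] (Y d1 d2) ∧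
      Measurable[.comap (potentialVector Y DA DB) inferInstance] (DA d1 d2) ∧
      Measurable[.comap (potentialVector Y DA DB) inferInstance] (DB d1 d2) := by
  have hT := comap_measurable (m := inferInstance) (potentialVector Y DA DB)
  rcases hd1 with rfl | rfl <;> rcases hd2 with rfl | rfl
  · exact ⟨hT.fst, hT.snd.snd.snd.snd.fst, hT.snd.snd.snd.snd.snd.snd.snd.snd.fst⟩
  · exact ⟨hT.snd.fst, hT.snd.snd.snd.snd.snd.fst, hT.snd.snd.snd.snd.snd.snd.snd.snd.snd.fst⟩
  · exact ⟨hT.snd.snd.fst, hT.snd.snd.snd.snd.snd.snd.fst,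
      hT.snd.snd.snd.snd.snd.snd.snd.snd.snd.snd.fst⟩
  · exact ⟨hT.snd.snd.snd.fst, hT.snd.snd.snd.snd.snd.snd.snd.fst,
      hT.snd.snd.snd.snd.snd.snd.snd.snd.snd.snd.snd⟩

lemma mem_unitInterval_of_eq_zero_or_eq_one {x : ℝ} (hx : x = 0 ∨ x = 1) : x ∈ unitInterval := by
  rcases hx with rfl | rfl
  exacts [unitInterval.zero_mem, unitInterval.one_mem]

lemma abs_sub_le_one_of_mem_unitInterval {x y : ℝ} (hx : x ∈ unitInterval) (hy : y ∈ unitInterval) :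
    |x - y| ≤ 1 :=
  abs_sub_le_of_nonneg_of_le hx.1 hx.2 hy.1 hy.2

lemma integral_realizedOutcome_sub [MeasurableSpace Ω] {μ : Measure Ω} {Y : ℝ → ℝ → Ω → ℝ}
    (hY : ∀ d1 d2 : ℝ, (d1 = 0 ∨ d1 = 1) → (d2 = 0 ∨ d2 = 1) → Integrable (Y d1 d2) μ)
    {dA dB dA' dB' : Ω → ℝ} (hdA : Measurable dA) (hdB : Measurable dB)
    (hdA' : Measurable dA') (hdB' : Measurable dB')
    (hdA01 : ∀ ω, dA ω ∈ unitInterval) (hdB01 : ∀ ω, dB ω ∈ unitInterval)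
    (hdA'01 : ∀ ω, dA' ω ∈ unitInterval) (hdB'01 : ∀ ω, dB' ω ∈ unitInterval) :
    ∫ ω, realizedOutcome Y dA dB ω ∂μ - ∫ ω, realizedOutcome Y dA' dB' ω ∂μ =
      (∫ ω, (Y 1 0 ω - Y 0 0 ω) * (dA ω - dA' ω) ∂μ) +
        (∫ ω, (Y 0 1 ω - Y 0 0 ω) * (dB ω - dB' ω) ∂μ) +
          ∫ ω, ((Y 1 1 ω - Y 0 1 ω) - (Y 1 0 ω - Y 0 0 ω)) *
            (dA ω * dB ω - dA' ω * dB' ω) ∂μ := by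
  have hY00 := hY 0 0 (.inl rfl) (.inl rfl)
  have hΔA : Integrable (fun ω => Y 1 0 ω - Y 0 0 ω) μ := (hY 1 0 (.inr rfl) (.inl rfl)).sub hY00
  have hΔB : Integrable (fun ω => Y 0 1 ω - Y 0 0 ω) μ := (hY 0 1 (.inl rfl) (.inr rfl)).sub hY00
  have hΔI : Integrable (fun ω => (Y 1 1 ω - Y 0 1 ω) - (Y 1 0 ω - Y 0 0 ω)) μ :=
    ((hY 1 1 (.inr rfl) (.inr rfl)).sub (hY 0 1 (.inl rfl) (.inr rfl))).sub hΔA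
  have hbdd : ∀ {g : Ω → ℝ}, (∀ ω, |g ω| ≤ 1) → ∀ᵐ ω ∂μ, ‖g ω‖ ≤ 1 :=
    fun hg => ae_of_all _ hg
  have hmem : ∀ {g : Ω → ℝ}, (∀ ω, g ω ∈ unitInterval) → ∀ ω, |g ω| ≤ 1 :=
    fun hg ω => (abs_of_nonneg (hg ω).1).trans_le (hg ω).2
  have hint : ∀ {d e : Ω → ℝ}, Measurable d → Measurable e → (∀ ω, d ω ∈ unitInterval) →
      (∀ ω, e ω ∈ unitInterval) → Integrable (realizedOutcome Y d e) μ :=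
    fun hd he hd01 he01 =>
      ((hY00.add (hΔA.mul_bdd hd.aestronglyMeasurable (hbdd (hmem hd01)))).add
        (hΔB.mul_bdd he.aestronglyMeasurable (hbdd (hmem he01)))).add
        (hΔI.mul_bdd (hd.mul he).aestronglyMeasurable
          (hbdd (hmem fun ω => unitInterval.mul_mem (hd01 ω) (he01 ω))))
  have iA : Integrable (fun ω => (Y 1 0 ω - Y 0 0 ω) * (dA ω - dA' ω)) μ :=
    hΔA.mul_bdd (hdA.sub hdA').aestronglyMeasurable
      (hbdd fun ω => abs_sub_le_one_of_mem_unitInterval (hdA01 ω) (hdA'01 ω))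
  have iB : Integrable (fun ω => (Y 0 1 ω - Y 0 0 ω) * (dB ω - dB' ω)) μ :=
    hΔB.mul_bdd (hdB.sub hdB').aestronglyMeasurable
      (hbdd fun ω => abs_sub_le_one_of_mem_unitInterval (hdB01 ω) (hdB'01 ω))
  have iI : Integrable (fun ω => ((Y 1 1 ω - Y 0 1 ω) - (Y 1 0 ω - Y 0 0 ω)) *
      (dA ω * dB ω - dA' ω * dB' ω)) μ :=
    hΔI.mul_bdd ((hdA.mul hdB).sub (hdA'.mul hdB')).aestronglyMeasurable
      (hbdd fun ω => abs_sub_le_one_of_mem_unitInterval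
        (unitInterval.mul_mem (hdA01 ω) (hdB01 ω)) (unitInterval.mul_mem (hdA'01 ω) (hdB'01 ω)))
  rw [← integral_sub (hint hdA hdB hdA01 hdB01) (hint hdA' hdB' hdA'01 hdB'01),
    ← integral_add iA iB, ← integral_add (by exact iA.add iB) iI]
  congr 1 with ω
  simp only [realizedOutcome]
  ring

end

theorem stmt_7_general {Ω : Type*} [MeasurableSpace Ω] (μ : Measure Ω) [IsProbabilityMeasure μ]
    (ZA ZB : Ω → ℝ) (DA DB : ℝ → ℝ → Ω → ℝ) (Y : ℝ → ℝ → Ω → ℝ)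
    (DAobs DBobs Yobs : Ω → ℝ) (z : ℝ) (hz : z = 0 ∨ z = 1)
    (hZAm : Measurable ZA) (hZBm : Measurable ZB)
    (hDAm : ∀ z1 z2 : ℝ, (z1 = 0 ∨ z1 = 1) → (z2 = 0 ∨ z2 = 1) → Measurable (DA z1 z2))
    (hDBm : ∀ z1 z2 : ℝ, (z1 = 0 ∨ z1 = 1) → (z2 = 0 ∨ z2 = 1) → Measurable (DB z1 z2))
    (hDAbin : ∀ z1 z2 : ℝ, (z1 = 0 ∨ z1 = 1) → (z2 = 0 ∨ z2 = 1) →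
      ∀ ω, DA z1 z2 ω = 0 ∨ DA z1 z2 ω = 1)
    (hDBbin : ∀ z1 z2 : ℝ, (z1 = 0 ∨ z1 = 1) → (z2 = 0 ∨ z2 = 1) →
      ∀ ω, DB z1 z2 ω = 0 ∨ DB z1 z2 ω = 1)
    (hYm : ∀ d1 d2 : ℝ, (d1 = 0 ∨ d1 = 1) → (d2 = 0 ∨ d2 = 1) → Measurable (Y d1 d2))
    (hYint : ∀ d1 d2 : ℝ, (d1 = 0 ∨ d1 = 1) → (d2 = 0 ∨ d2 = 1) → Integrable (Y d1 d2) μ)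
    (hDAobs : ∀ ω, DAobs ω = DA (ZA ω) (ZB ω) ω)
    (hDBobs : ∀ ω, DBobs ω = DB (ZA ω) (ZB ω) ω)
    (hYobs : ∀ ω, Yobs ω = Y 0 0 ω + (Y 1 0 ω - Y 0 0 ω) * DAobs ω +
      (Y 0 1 ω - Y 0 0 ω) * DBobs ω +
      ((Y 1 1 ω - Y 0 1 ω) - (Y 1 0 ω - Y 0 0 ω)) * (DAobs ω * DBobs ω))
    (hindep : IndepFun (fun ω => (ZA ω, ZB ω))
      (fun ω => (Y 0 0 ω, Y 0 1 ω, Y 1 0 ω, Y 1 1 ω,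
        DA 0 0 ω, DA 0 1 ω, DA 1 0 ω, DA 1 1 ω,
        DB 0 0 ω, DB 0 1 ω, DB 1 0 ω, DB 1 1 ω)) μ)
    (hz1 : 0 < μ {ω | ZA ω = 1 ∧ ZB ω = z})
    (hz0 : 0 < μ {ω | ZA ω = 0 ∧ ZB ω = z}) :
    cexp μ Yobs {ω | ZA ω = 1 ∧ ZB ω = z} - cexp μ Yobs {ω | ZA ω = 0 ∧ ZB ω = z} =
      (∫ ω, (Y 1 0 ω - Y 0 0 ω) * (DA 1 z ω - DA 0 z ω) ∂μ) +
        (∫ ω, (Y 0 1 ω - Y 0 0 ω) * (DB 1 z ω - DB 0 z ω) ∂μ) +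
          ∫ ω, ((Y 1 1 ω - Y 0 1 ω) - (Y 1 0 ω - Y 0 0 ω)) *
            (DA 1 z ω * DB 1 z ω - DA 0 z ω * DB 0 z ω) ∂μ := by
  have h0 : (0 : ℝ) = 0 ∨ (0 : ℝ) = 1 := .inl rfl
  have h1 : (1 : ℝ) = 0 ∨ (1 : ℝ) = 1 := .inr rfl
  have hind : Indep (.comap (fun ω => (ZA ω, ZB ω)) inferInstance)
      (.comap (potentialVector Y DA DB) inferInstance) μ :=
    (IndepFun_iff_Indep _ _ _).1 hindep
  have hcexp : ∀ a, (a = 0 ∨ a = 1) → 0 < μ {ω | ZA ω = a ∧ ZB ω = z} →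
      cexp μ Yobs {ω | ZA ω = a ∧ ZB ω = z} = ∫ ω, realizedOutcome Y (DA a z) (DB a z) ω ∂μ := by
    intro a ha hpos
    refine cexp_eq_integral_of_indep (hZAm.prodMk hZBm).comap_le hind
      (measurable_realizedOutcome
        (fun d1 d2 hd1 hd2 => (measurable_comap_potentialVector Y DA DB hd1 hd2).1)
        (measurable_comap_potentialVector Y DA DB ha hz).2.1
        (measurable_comap_potentialVector Y DA DB ha hz).2.2)
      (measurable_realizedOutcome hYm (hDAm a z ha hz) (hDBm a z ha hz)).aemeasurable
      ⟨{(a, z)}, measurableSet_singleton _, by ext; simp⟩ hpos.ne' ?_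
    rintro ω ⟨rfl, rfl⟩
    rw [hYobs, hDAobs, hDBobs, realizedOutcome]
  rw [hcexp 1 h1 hz1, hcexp 0 h0 hz0]
  exact integral_realizedOutcome_sub hYint (hDAm 1 z h1 hz) (hDBm 1 z h1 hz) (hDAm 0 z h0 hz)
    (hDBm 0 z h0 hz)
    (fun ω => mem_unitInterval_of_eq_zero_or_eq_one (hDAbin 1 z h1 hz ω))
    (fun ω => mem_unitInterval_of_eq_zero_or_eq_one (hDBbin 1 z h1 hz ω))
    (fun ω => mem_unitInterval_of_eq_zero_or_eq_one (hDAbin 0 z h0 hz ω))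
    (fun ω => mem_unitInterval_of_eq_zero_or_eq_one (hDBbin 0 z h0 hz ω))

theorem stmt_7 {Ω : Type*} [MeasurableSpace Ω] (μ : Measure Ω) [IsProbabilityMeasure μ]
    (ZA ZB : Ω → ℝ) (DA DB : ℝ → ℝ → Ω → ℝ) (Y : ℝ → ℝ → Ω → ℝ)
    (DAobs DBobs Yobs : Ω → ℝ) (z : ℝ) (hz : z = 0 ∨ z = 1)
    (hZAm : Measurable ZA) (hZBm : Measurable ZB)
    (hZAbin : ∀ ω, ZA ω = 0 ∨ ZA ω = 1) (hZBbin : ∀ ω, ZB ω = 0 ∨ ZB ω = 1)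
    (hDAm : ∀ z1 z2 : ℝ, (z1 = 0 ∨ z1 = 1) → (z2 = 0 ∨ z2 = 1) → Measurable (DA z1 z2))
    (hDBm : ∀ z1 z2 : ℝ, (z1 = 0 ∨ z1 = 1) → (z2 = 0 ∨ z2 = 1) → Measurable (DB z1 z2))
    (hDAbin : ∀ z1 z2 : ℝ, (z1 = 0 ∨ z1 = 1) → (z2 = 0 ∨ z2 = 1) →
      ∀ ω, DA z1 z2 ω = 0 ∨ DA z1 z2 ω = 1)
    (hDBbin : ∀ z1 z2 : ℝ, (z1 = 0 ∨ z1 = 1) → (z2 = 0 ∨ z2 = 1) →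
      ∀ ω, DB z1 z2 ω = 0 ∨ DB z1 z2 ω = 1)
    (hYm : ∀ d1 d2 : ℝ, (d1 = 0 ∨ d1 = 1) → (d2 = 0 ∨ d2 = 1) → Measurable (Y d1 d2))
    (hYint : ∀ d1 d2 : ℝ, (d1 = 0 ∨ d1 = 1) → (d2 = 0 ∨ d2 = 1) → Integrable (Y d1 d2) μ)
    (hDAobs : ∀ ω, DAobs ω = DA (ZA ω) (ZB ω) ω)
    (hDBobs : ∀ ω, DBobs ω = DB (ZA ω) (ZB ω) ω)
    (hYobs : ∀ ω, Yobs ω = Y 0 0 ω + (Y 1 0 ω - Y 0 0 ω) * DAobs ω +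
      (Y 0 1 ω - Y 0 0 ω) * DBobs ω +
      ((Y 1 1 ω - Y 0 1 ω) - (Y 1 0 ω - Y 0 0 ω)) * (DAobs ω * DBobs ω))
    (hindep : IndepFun (fun ω => (ZA ω, ZB ω))
      (fun ω => (Y 0 0 ω, Y 0 1 ω, Y 1 0 ω, Y 1 1 ω,
        DA 0 0 ω, DA 0 1 ω, DA 1 0 ω, DA 1 1 ω,
        DB 0 0 ω, DB 0 1 ω, DB 1 0 ω, DB 1 1 ω)) μ)
    (hz1 : 0 < μ {ω | ZA ω = 1 ∧ ZB ω = z})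
    (hz0 : 0 < μ {ω | ZA ω = 0 ∧ ZB ω = z}) :
    cexp μ Yobs {ω | ZA ω = 1 ∧ ZB ω = z} - cexp μ Yobs {ω | ZA ω = 0 ∧ ZB ω = z} =
      (∫ ω, (Y 1 0 ω - Y 0 0 ω) * (DA 1 z ω - DA 0 z ω) ∂μ) +
        (∫ ω, (Y 0 1 ω - Y 0 0 ω) * (DB 1 z ω - DB 0 z ω) ∂μ) +
          ∫ ω, ((Y 1 1 ω - Y 0 1 ω) - (Y 1 0 ω - Y 0 0 ω)) *
            (DA 1 z ω * DB 1 z ω - DA 0 z ω * DB 0 z ω) ∂μ :=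
  stmt_7_general μ ZA ZB DA DB Y DAobs DBobs Yobs z hz hZAm hZBm hDAm hDBm hDAbin hDBbin hYm hYint
    hDAobs hDBobs hYobs hindep hz1 hz0
end

section
/- (Wald estimand with monotone own instrument.) Fix z=0. Suppose (Z_A,Z_B) is independent of all potential outcomes and potential treatments, D_B satisfies one-sided noncompliance (D_B(z,0)=0), D_A(0,0) ≤ D_A(1,0) pointwise, and P(D_A(1,0)=1, D_A(0,0)=0)>0. Then (E[Y|Z_A=1,Z_B=0]−E[Y|Z_A=0,Z_B=0])/(E[D_A|Z_A=1,Z_B=0]−E[D_A|Z_A=0,Z_B=0]) = E[Y(1,0)−Y(0,0) | D_A(1,0)=1, D_A(0,0)=0]. -/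
/-!
On the event `{Z_A = z, Z_B = 0}` one-sided noncompliance forces `D_B = 0`, so the observed
outcome there is `Y(0,0) + D_A(z,0) (Y(1,0) - Y(0,0))` and the observed treatment is `D_A(z,0)`:
functions of the potential variables alone. Independence of the instruments therefore turns each
conditional mean into an unconditional one. Monotonicity makes `D_A(1,0) - D_A(0,0)` the indicator
of the compliers `C`, so the difference of the means is `E[1_C (Y(1,0) - Y(0,0))]` in the
numerator and `P(C)` in the denominator.
-/

open MeasureTheory ProbabilityTheory

theorem apply_eq_add_mul_sub_of_binary {d : ℝ} (hd : d = 0 ∨ d = 1) (f : ℝ → ℝ) :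
    f d = f 0 + d * (f 1 - f 0) := by
  rcases hd with rfl | rfl <;> ring

theorem sub_eq_indicator_of_binary_le {Ω : Type*} {D0 D1 : Ω → ℝ}
    (hD0bin : ∀ ω, D0 ω = 0 ∨ D0 ω = 1) (hD1bin : ∀ ω, D1 ω = 0 ∨ D1 ω = 1)
    (hle : ∀ ω, D0 ω ≤ D1 ω) :
    (fun ω => D1 ω - D0 ω) = {ω | D1 ω = 1 ∧ D0 ω = 0}.indicator 1 := by
  funext ω
  have hω := hle ω
  rcases hD0bin ω with h0 | h0 <;> rcases hD1bin ω with h1 | h1 <;>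
    simp_all [Set.indicator]
  linarith

section

variable {Ω : Type*} [MeasurableSpace Ω] {μ : Measure Ω}

theorem MeasureTheory.Integrable.of_binary [IsFiniteMeasure μ] {D : Ω → ℝ} (hD : Measurable D)
    (hDbin : ∀ ω, D ω = 0 ∨ D ω = 1) : Integrable D μ :=
  Integrable.of_bound hD.aestronglyMeasurable 1 (ae_of_all _ fun ω => by
    rcases hDbin ω with h | h <;> simp [h])

theorem MeasureTheory.Integrable.binary_mul {D f : Ω → ℝ} (hD : Measurable D)
    (hDbin : ∀ ω, D ω = 0 ∨ D ω = 1) (hf : Integrable f μ) :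
    Integrable (fun ω => D ω * f ω) μ :=
  hf.bdd_mul hD.aestronglyMeasurable (c := 1) (ae_of_all _ fun ω => by
    rcases hDbin ω with h | h <;> simp [h])

theorem ProbabilityTheory.IndepFun.cexp_preimage_eq_integral [IsFiniteMeasure μ]
    {β γ : Type*} [MeasurableSpace β] [MeasurableSpace γ] {Z : Ω → β} {V : Ω → γ}
    (hZV : IndepFun Z V μ) (hZ : Measurable Z) (hV : AEMeasurable V μ) {S : Set β}
    (hS : MeasurableSet S) (hS0 : μ (Z ⁻¹' S) ≠ 0) {g : γ → ℝ} (hg : Measurable g)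
    {X : Ω → ℝ} (hX : Set.EqOn X (fun ω => g (V ω)) (Z ⁻¹' S)) :
    cexp μ X (Z ⁻¹' S) = ∫ ω, g (V ω) ∂μ := by
  rw [cexp, setIntegral_congr_fun (hZ hS) hX,
    ((IndepFun_iff_Indep Z V μ).1 hZV).setIntegral_eq_mul hZ.comap_le hV ⟨S, hS, rfl⟩
      hg.aestronglyMeasurable,
    measureReal_def, mul_div_cancel_left₀ _ (ENNReal.toReal_ne_zero.2 ⟨hS0, measure_ne_top μ _⟩)]

theorem ProbabilityTheory.IndepFun.cexp_setOf_eq_and_eq_eq_integral [IsFiniteMeasure μ]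
    {γ : Type*} [MeasurableSpace γ] {ZA ZB : Ω → ℝ} {V : Ω → γ}
    (hZV : IndepFun (fun ω => (ZA ω, ZB ω)) V μ) (hZA : Measurable ZA) (hZB : Measurable ZB)
    (hV : AEMeasurable V μ) {a b : ℝ} (hpos : 0 < μ {ω | ZA ω = a ∧ ZB ω = b})
    {g : γ → ℝ} (hg : Measurable g) {X : Ω → ℝ}
    (hX : Set.EqOn X (fun ω => g (V ω)) {ω | ZA ω = a ∧ ZB ω = b}) :
    cexp μ X {ω | ZA ω = a ∧ ZB ω = b} = ∫ ω, g (V ω) ∂μ := by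
  have hE : {ω | ZA ω = a ∧ ZB ω = b} = (fun ω => (ZA ω, ZB ω)) ⁻¹' {(a, b)} := by
    ext ω; simp
  rw [hE] at hpos hX ⊢
  exact hZV.cexp_preimage_eq_integral (hZA.prodMk hZB) hV (measurableSet_singleton _) hpos.ne' hg hX

theorem wald_ratio_eq_cexp_compliers [IsFiniteMeasure μ] {D0 D1 Y0 Y1 : Ω → ℝ}
    (hD0 : Measurable D0) (hD1 : Measurable D1) (hD0bin : ∀ ω, D0 ω = 0 ∨ D0 ω = 1)
    (hD1bin : ∀ ω, D1 ω = 0 ∨ D1 ω = 1) (hle : ∀ ω, D0 ω ≤ D1 ω)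
    (hY0 : Integrable Y0 μ) (hY1 : Integrable Y1 μ) :
    ((∫ ω, Y0 ω + D1 ω * (Y1 ω - Y0 ω) ∂μ) - ∫ ω, Y0 ω + D0 ω * (Y1 ω - Y0 ω) ∂μ) /
        ((∫ ω, D1 ω ∂μ) - ∫ ω, D0 ω ∂μ) =
      cexp μ (fun ω => Y1 ω - Y0 ω) {ω | D1 ω = 1 ∧ D0 ω = 0} := by
  have hC : MeasurableSet {ω | D1 ω = 1 ∧ D0 ω = 0} :=
    (hD1 (measurableSet_singleton 1)).inter (hD0 (measurableSet_singleton 0))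
  have hcomplier := sub_eq_indicator_of_binary_le hD0bin hD1bin hle
  have hswitch : ∀ D : Ω → ℝ, Measurable D → (∀ ω, D ω = 0 ∨ D ω = 1) →
      Integrable (fun ω => Y0 ω + D ω * (Y1 ω - Y0 ω)) μ := fun D hD hDbin =>
    hY0.add ((hY1.sub hY0).binary_mul hD hDbin)
  have hnum : (∫ ω, Y0 ω + D1 ω * (Y1 ω - Y0 ω) ∂μ) - ∫ ω, Y0 ω + D0 ω * (Y1 ω - Y0 ω) ∂μ =
      ∫ ω in {ω | D1 ω = 1 ∧ D0 ω = 0}, Y1 ω - Y0 ω ∂μ := by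
    rw [← integral_sub (hswitch D1 hD1 hD1bin) (hswitch D0 hD0 hD0bin), ← integral_indicator hC]
    congr 1 with ω
    rw [show Y0 ω + D1 ω * (Y1 ω - Y0 ω) - (Y0 ω + D0 ω * (Y1 ω - Y0 ω)) =
        (D1 ω - D0 ω) * (Y1 ω - Y0 ω) by ring, congrFun hcomplier ω]
    by_cases hω : ω ∈ {ω | D1 ω = 1 ∧ D0 ω = 0} <;> simp [hω]
  have hden : (∫ ω, D1 ω ∂μ) - ∫ ω, D0 ω ∂μ = (μ {ω | D1 ω = 1 ∧ D0 ω = 0}).toReal := by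
    rw [← integral_sub (.of_binary hD1 hD1bin) (.of_binary hD0 hD0bin), hcomplier,
      integral_indicator_one hC, measureReal_def]
  rw [hnum, hden, cexp]

end

theorem stmt_10_general {Ω : Type*} [MeasurableSpace Ω] (μ : Measure Ω) [IsProbabilityMeasure μ]
    (ZA ZB : Ω → ℝ) (DA DB : ℝ → ℝ → Ω → ℝ) (Y : ℝ → ℝ → Ω → ℝ)
    (DAobs DBobs Yobs : Ω → ℝ)
    (hZAm : Measurable ZA) (hZBm : Measurable ZB)
    (hDAm : ∀ z1 z2 : ℝ, (z1 = 0 ∨ z1 = 1) → (z2 = 0 ∨ z2 = 1) → Measurable (DA z1 z2))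
    (hDAbin : ∀ z1 z2 : ℝ, (z1 = 0 ∨ z1 = 1) → (z2 = 0 ∨ z2 = 1) →
      ∀ ω, DA z1 z2 ω = 0 ∨ DA z1 z2 ω = 1)
    (hYint : ∀ d1 d2 : ℝ, (d1 = 0 ∨ d1 = 1) → (d2 = 0 ∨ d2 = 1) → Integrable (Y d1 d2) μ)
    (hDAobs : ∀ ω, DAobs ω = DA (ZA ω) (ZB ω) ω)
    (hDBobs : ∀ ω, DBobs ω = DB (ZA ω) (ZB ω) ω)
    (hYobs : ∀ ω, Yobs ω = Y (DAobs ω) (DBobs ω) ω)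
    (hindep : IndepFun (fun ω => (ZA ω, ZB ω))
      (fun ω => (Y 0 0 ω, Y 0 1 ω, Y 1 0 ω, Y 1 1 ω,
        DA 0 0 ω, DA 0 1 ω, DA 1 0 ω, DA 1 1 ω,
        DB 0 0 ω, DB 0 1 ω, DB 1 0 ω, DB 1 1 ω)) μ)
    (honcB : ∀ z : ℝ, (z = 0 ∨ z = 1) → ∀ ω, DB z 0 ω = 0)
    (hmono : ∀ ω, DA 0 0 ω ≤ DA 1 0 ω)
    (hz10 : 0 < μ {ω | ZA ω = 1 ∧ ZB ω = 0})
    (hz00 : 0 < μ {ω | ZA ω = 0 ∧ ZB ω = 0}) :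
    (cexp μ Yobs {ω | ZA ω = 1 ∧ ZB ω = 0} - cexp μ Yobs {ω | ZA ω = 0 ∧ ZB ω = 0}) /
        (cexp μ DAobs {ω | ZA ω = 1 ∧ ZB ω = 0} - cexp μ DAobs {ω | ZA ω = 0 ∧ ZB ω = 0}) =
      cexp μ (fun ω => Y 1 0 ω - Y 0 0 ω) {ω | DA 1 0 ω = 1 ∧ DA 0 0 ω = 0} := by
  have h0 : (0 : ℝ) = 0 ∨ (0 : ℝ) = 1 := .inl rfl
  have h1 : (1 : ℝ) = 0 ∨ (1 : ℝ) = 1 := .inr rfl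
  have hind1 : IndepFun (fun ω => (ZA ω, ZB ω)) (fun ω => (DA 1 0 ω, Y 1 0 ω, Y 0 0 ω)) μ := by
    exact hindep.comp measurable_id (ψ := fun w => (w.2.2.2.2.2.2.1, w.2.2.1, w.1)) (by fun_prop)
  have hind0 : IndepFun (fun ω => (ZA ω, ZB ω)) (fun ω => (DA 0 0 ω, Y 1 0 ω, Y 0 0 ω)) μ := by
    exact hindep.comp measurable_id (ψ := fun w => (w.2.2.2.2.1, w.2.2.1, w.1)) (by fun_prop)
  have hV : ∀ z : ℝ, (z = 0 ∨ z = 1) →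
      AEMeasurable (fun ω => (DA z 0 ω, Y 1 0 ω, Y 0 0 ω)) μ := fun z hz =>
    (hDAm z 0 hz h0).aemeasurable.prodMk
      ((hYint 1 0 h1 h0).aemeasurable.prodMk (hYint 0 0 h0 h0).aemeasurable)
  have hYon : ∀ z : ℝ, (z = 0 ∨ z = 1) → Set.EqOn Yobs
      (fun ω => Y 0 0 ω + DA z 0 ω * (Y 1 0 ω - Y 0 0 ω)) {ω | ZA ω = z ∧ ZB ω = 0} := by
    rintro z hz ω ⟨hzA, hzB⟩
    rw [hYobs, hDBobs, hDAobs, hzA, hzB, honcB z hz]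
    exact apply_eq_add_mul_sub_of_binary (hDAbin z 0 hz h0 ω) (fun d => Y d 0 ω)
  have hDon : ∀ z : ℝ, Set.EqOn DAobs (DA z 0) {ω | ZA ω = z ∧ ZB ω = 0} := by
    rintro z ω ⟨hzA, hzB⟩
    rw [hDAobs, hzA, hzB]
  have hswitch : Measurable fun v : ℝ × ℝ × ℝ => v.2.2 + v.1 * (v.2.1 - v.2.2) := by fun_prop
  rw [hind1.cexp_setOf_eq_and_eq_eq_integral hZAm hZBm (hV 1 h1) hz10 hswitch (hYon 1 h1),
    hind0.cexp_setOf_eq_and_eq_eq_integral hZAm hZBm (hV 0 h0) hz00 hswitch (hYon 0 h0),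
    hind1.cexp_setOf_eq_and_eq_eq_integral hZAm hZBm (hV 1 h1) hz10 measurable_fst (hDon 1),
    hind0.cexp_setOf_eq_and_eq_eq_integral hZAm hZBm (hV 0 h0) hz00 measurable_fst (hDon 0)]
  exact wald_ratio_eq_cexp_compliers (hDAm 0 0 h0 h0) (hDAm 1 0 h1 h0) (hDAbin 0 0 h0 h0)
    (hDAbin 1 0 h1 h0) hmono (hYint 0 0 h0 h0) (hYint 1 0 h1 h0)

theorem stmt_10 {Ω : Type*} [MeasurableSpace Ω] (μ : Measure Ω) [IsProbabilityMeasure μ]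
    (ZA ZB : Ω → ℝ) (DA DB : ℝ → ℝ → Ω → ℝ) (Y : ℝ → ℝ → Ω → ℝ)
    (DAobs DBobs Yobs : Ω → ℝ)
    (hZAm : Measurable ZA) (hZBm : Measurable ZB)
    (hZAbin : ∀ ω, ZA ω = 0 ∨ ZA ω = 1) (hZBbin : ∀ ω, ZB ω = 0 ∨ ZB ω = 1)
    (hDAm : ∀ z1 z2 : ℝ, (z1 = 0 ∨ z1 = 1) → (z2 = 0 ∨ z2 = 1) → Measurable (DA z1 z2))
    (hDBm : ∀ z1 z2 : ℝ, (z1 = 0 ∨ z1 = 1) → (z2 = 0 ∨ z2 = 1) → Measurable (DB z1 z2))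
    (hDAbin : ∀ z1 z2 : ℝ, (z1 = 0 ∨ z1 = 1) → (z2 = 0 ∨ z2 = 1) →
      ∀ ω, DA z1 z2 ω = 0 ∨ DA z1 z2 ω = 1)
    (hDBbin : ∀ z1 z2 : ℝ, (z1 = 0 ∨ z1 = 1) → (z2 = 0 ∨ z2 = 1) →
      ∀ ω, DB z1 z2 ω = 0 ∨ DB z1 z2 ω = 1)
    (hYm : ∀ d1 d2 : ℝ, (d1 = 0 ∨ d1 = 1) → (d2 = 0 ∨ d2 = 1) → Measurable (Y d1 d2))
    (hYint : ∀ d1 d2 : ℝ, (d1 = 0 ∨ d1 = 1) → (d2 = 0 ∨ d2 = 1) → Integrable (Y d1 d2) μ)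
    (hDAobs : ∀ ω, DAobs ω = DA (ZA ω) (ZB ω) ω)
    (hDBobs : ∀ ω, DBobs ω = DB (ZA ω) (ZB ω) ω)
    (hYobs : ∀ ω, Yobs ω = Y (DAobs ω) (DBobs ω) ω)
    (hindep : IndepFun (fun ω => (ZA ω, ZB ω))
      (fun ω => (Y 0 0 ω, Y 0 1 ω, Y 1 0 ω, Y 1 1 ω,
        DA 0 0 ω, DA 0 1 ω, DA 1 0 ω, DA 1 1 ω,
        DB 0 0 ω, DB 0 1 ω, DB 1 0 ω, DB 1 1 ω)) μ)
    (honcB : ∀ z : ℝ, (z = 0 ∨ z = 1) → ∀ ω, DB z 0 ω = 0)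
    (hmono : ∀ ω, DA 0 0 ω ≤ DA 1 0 ω)
    (hz10 : 0 < μ {ω | ZA ω = 1 ∧ ZB ω = 0})
    (hz00 : 0 < μ {ω | ZA ω = 0 ∧ ZB ω = 0})
    (hfs : 0 < μ {ω | DA 1 0 ω = 1 ∧ DA 0 0 ω = 0}) :
    (cexp μ Yobs {ω | ZA ω = 1 ∧ ZB ω = 0} - cexp μ Yobs {ω | ZA ω = 0 ∧ ZB ω = 0}) /
        (cexp μ DAobs {ω | ZA ω = 1 ∧ ZB ω = 0} - cexp μ DAobs {ω | ZA ω = 0 ∧ ZB ω = 0}) =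
      cexp μ (fun ω => Y 1 0 ω - Y 0 0 ω) {ω | DA 1 0 ω = 1 ∧ DA 0 0 ω = 0} :=
  stmt_10_general μ ZA ZB DA DB Y DAobs DBobs Yobs hZAm hZBm hDAm hDAbin hYint hDAobs hDBobs hYobs
    hindep honcB hmono hz10 hz00
end

section
/- (Upper and lower bound for E[Y(0,0)|(c,c)].) Under the IV, one-sided noncompliance, first-stage, and bounded-outcome assumptions with monotone treatment response (Y(1,0)≥Y(0,0)≥0 and Y(0,1)≥Y(0,0)≥0), the conditional mean E[Y(0,0) | C_A∩C_B] satisfies L ≤ E[Y(0,0)|C_A∩C_B] ≤ U where U = (E[Y(0,0)] − E[Y(0,0)|C_A^c∩C_B^c]·P(C_A^c∩C_B^c))/P(C_A∩C_B) and L = U − (E[Y(1,0)|C_A∩C_B^c]·P(C_A∩C_B^c) + E[Y(0,1)|C_A^c∩C_B]·P(C_A^c∩C_B))/P(C_A∩C_B). -/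
open MeasureTheory ProbabilityTheory

/-! Write `∫_S f` for `∫ ω in S, f ω ∂μ`, and `cc, cn, nc, nn` for the cells `CA ∩ CB, CA ∩ CBᶜ, …`.
Splitting `E[Y(0,0)]` over the four cells gives
`P(cc)·E[Y(0,0)|cc] = E[Y(0,0)] - ∫_nn Y(0,0) - ∫_cn Y(0,0) - ∫_nc Y(0,0)`.
The two mixed cells contribute something nonnegative, which gives the upper bound, and by
monotone treatment response at most `∫_cn Y(1,0) + ∫_nc Y(0,1)`, which gives the lower one. -/

section

variable {Ω : Type*} [MeasurableSpace Ω] {μ : Measure Ω}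

lemma cexp_mul_measure_toReal [IsFiniteMeasure μ] (X : Ω → ℝ) (E : Set Ω) :
    cexp μ X E * (μ E).toReal = ∫ ω in E, X ω ∂μ := by
  rcases eq_or_ne (μ E) 0 with hE | hE
  · simp [Measure.restrict_eq_zero.mpr hE, hE]
  · exact div_mul_cancel₀ _ (ENNReal.toReal_ne_zero.mpr ⟨hE, measure_ne_top μ E⟩)

lemma integral_eq_sum_inter_compl {f : Ω → ℝ} {A B : Set Ω} (hA : MeasurableSet A)
    (hB : MeasurableSet B) (hf : Integrable f μ) :
    ∫ ω, f ω ∂μ = ∫ ω in A ∩ B, f ω ∂μ + ∫ ω in A ∩ Bᶜ, f ω ∂μ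
      + ∫ ω in Aᶜ ∩ B, f ω ∂μ + ∫ ω in Aᶜ ∩ Bᶜ, f ω ∂μ := by
  rw [add_assoc _ (∫ ω in Aᶜ ∩ B, f ω ∂μ), ← Set.sdiff_eq, ← Set.sdiff_eq, integral_inter_add_sdiff hB hf.integrableOn,
    integral_inter_add_sdiff hB hf.integrableOn, integral_add_compl hA hf]

variable {f g h : Ω → ℝ} {A B : Set Ω}

lemma setIntegral_inter_le_sub_compl_inter_compl (hA : MeasurableSet A) (hB : MeasurableSet B)
    (hf : Integrable f μ) (hf_nonneg : 0 ≤ᵐ[μ] f) :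
    ∫ ω in A ∩ B, f ω ∂μ ≤ ∫ ω, f ω ∂μ - ∫ ω in Aᶜ ∩ Bᶜ, f ω ∂μ := by
  have hAB : 0 ≤ ∫ ω in A ∩ Bᶜ, f ω ∂μ := setIntegral_nonneg_of_ae hf_nonneg
  have hBA : 0 ≤ ∫ ω in Aᶜ ∩ B, f ω ∂μ := setIntegral_nonneg_of_ae hf_nonneg
  linarith [integral_eq_sum_inter_compl hA hB hf]

lemma sub_compl_inter_compl_sub_le_setIntegral_inter (hA : MeasurableSet A)
    (hB : MeasurableSet B) (hf : Integrable f μ) (hg : Integrable g μ) (hh : Integrable h μ)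
    (hfg : f ≤ᵐ[μ] g) (hfh : f ≤ᵐ[μ] h) :
    ∫ ω, f ω ∂μ - ∫ ω in Aᶜ ∩ Bᶜ, f ω ∂μ - (∫ ω in A ∩ Bᶜ, g ω ∂μ + ∫ ω in Aᶜ ∩ B, h ω ∂μ)
      ≤ ∫ ω in A ∩ B, f ω ∂μ := by
  have hAB := setIntegral_mono_ae (s := A ∩ Bᶜ) hf.integrableOn hg.integrableOn hfg
  have hBA := setIntegral_mono_ae (s := Aᶜ ∩ B) hf.integrableOn hh.integrableOn hfh
  linarith [integral_eq_sum_inter_compl hA hB hf]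

end

theorem stmt_11_general {Ω : Type*} [MeasurableSpace Ω] (μ : Measure Ω) [IsProbabilityMeasure μ]
    (DA DB : ℝ → ℝ → Ω → ℝ) (Y : ℝ → ℝ → Ω → ℝ)
    (hDAm : ∀ z1 z2 : ℝ, (z1 = 0 ∨ z1 = 1) → (z2 = 0 ∨ z2 = 1) → Measurable (DA z1 z2))
    (hDBm : ∀ z1 z2 : ℝ, (z1 = 0 ∨ z1 = 1) → (z2 = 0 ∨ z2 = 1) → Measurable (DB z1 z2))
    (hYint : ∀ d1 d2 : ℝ, (d1 = 0 ∨ d1 = 1) → (d2 = 0 ∨ d2 = 1) → Integrable (Y d1 d2) μ)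
    (K : ℝ)
    (hbdd : ∀ d1 d2 : ℝ, (d1 = 0 ∨ d1 = 1) → (d2 = 0 ∨ d2 = 1) →
      ∀ᵐ ω ∂μ, 0 ≤ Y d1 d2 ω ∧ Y d1 d2 ω ≤ K)
    (hmtr10 : ∀ᵐ ω ∂μ, Y 0 0 ω ≤ Y 1 0 ω) (hmtr01 : ∀ᵐ ω ∂μ, Y 0 0 ω ≤ Y 0 1 ω)
    (CA CB : Set Ω) (hCA : CA = {ω | DA 1 1 ω = 1}) (hCB : CB = {ω | DB 1 1 ω = 1})
    (hcc : 0 < μ (CA ∩ CB))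
    (U L : ℝ)
    (hU : U = ((∫ ω, Y 0 0 ω ∂μ) -
      cexp μ (fun ω => Y 0 0 ω) (CAᶜ ∩ CBᶜ) * (μ (CAᶜ ∩ CBᶜ)).toReal) / (μ (CA ∩ CB)).toReal)
    (hL : L = U - (cexp μ (fun ω => Y 1 0 ω) (CA ∩ CBᶜ) * (μ (CA ∩ CBᶜ)).toReal +
      cexp μ (fun ω => Y 0 1 ω) (CAᶜ ∩ CB) * (μ (CAᶜ ∩ CB)).toReal) / (μ (CA ∩ CB)).toReal) :
    L ≤ cexp μ (fun ω => Y 0 0 ω) (CA ∩ CB) ∧ cexp μ (fun ω => Y 0 0 ω) (CA ∩ CB) ≤ U := by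
  have hCAm : MeasurableSet CA := hCA ▸ hDAm 1 1 (.inr rfl) (.inr rfl) (measurableSet_singleton 1)
  have hCBm : MeasurableSet CB := hCB ▸ hDBm 1 1 (.inr rfl) (.inr rfl) (measurableSet_singleton 1)
  have hp : 0 < (μ (CA ∩ CB)).toReal := ENNReal.toReal_pos hcc.ne' (measure_ne_top μ _)
  have hY00 := hYint 0 0 (.inl rfl) (.inl rfl)
  have hY00_nonneg : 0 ≤ᵐ[μ] Y 0 0 := (hbdd 0 0 (.inl rfl) (.inl rfl)).mono fun _ h => h.1
  simp only [cexp_mul_measure_toReal] at hU hL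
  rw [hL, hU, ← sub_div, cexp, div_le_div_iff_of_pos_right hp, div_le_div_iff_of_pos_right hp]
  exact ⟨sub_compl_inter_compl_sub_le_setIntegral_inter hCAm hCBm hY00
      (hYint 1 0 (.inr rfl) (.inl rfl)) (hYint 0 1 (.inl rfl) (.inr rfl)) hmtr10 hmtr01,
    setIntegral_inter_le_sub_compl_inter_compl hCAm hCBm hY00 hY00_nonneg⟩

theorem stmt_11 {Ω : Type*} [MeasurableSpace Ω] (μ : Measure Ω) [IsProbabilityMeasure μ]
    (ZA ZB : Ω → ℝ) (DA DB : ℝ → ℝ → Ω → ℝ) (Y : ℝ → ℝ → Ω → ℝ)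
    (DAobs DBobs Yobs : Ω → ℝ)
    (hZAm : Measurable ZA) (hZBm : Measurable ZB)
    (hZAbin : ∀ ω, ZA ω = 0 ∨ ZA ω = 1) (hZBbin : ∀ ω, ZB ω = 0 ∨ ZB ω = 1)
    (hDAm : ∀ z1 z2 : ℝ, (z1 = 0 ∨ z1 = 1) → (z2 = 0 ∨ z2 = 1) → Measurable (DA z1 z2))
    (hDBm : ∀ z1 z2 : ℝ, (z1 = 0 ∨ z1 = 1) → (z2 = 0 ∨ z2 = 1) → Measurable (DB z1 z2))
    (hDAbin : ∀ z1 z2 : ℝ, (z1 = 0 ∨ z1 = 1) → (z2 = 0 ∨ z2 = 1) →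
      ∀ ω, DA z1 z2 ω = 0 ∨ DA z1 z2 ω = 1)
    (hDBbin : ∀ z1 z2 : ℝ, (z1 = 0 ∨ z1 = 1) → (z2 = 0 ∨ z2 = 1) →
      ∀ ω, DB z1 z2 ω = 0 ∨ DB z1 z2 ω = 1)
    (hYm : ∀ d1 d2 : ℝ, (d1 = 0 ∨ d1 = 1) → (d2 = 0 ∨ d2 = 1) → Measurable (Y d1 d2))
    (hYint : ∀ d1 d2 : ℝ, (d1 = 0 ∨ d1 = 1) → (d2 = 0 ∨ d2 = 1) → Integrable (Y d1 d2) μ)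
    (hDAobs : ∀ ω, DAobs ω = DA (ZA ω) (ZB ω) ω)
    (hDBobs : ∀ ω, DBobs ω = DB (ZA ω) (ZB ω) ω)
    (hYobs : ∀ ω, Yobs ω = Y (DAobs ω) (DBobs ω) ω)
    (hindep : IndepFun (fun ω => (ZA ω, ZB ω))
      (fun ω => (Y 0 0 ω, Y 0 1 ω, Y 1 0 ω, Y 1 1 ω,
        DA 0 0 ω, DA 0 1 ω, DA 1 0 ω, DA 1 1 ω,
        DB 0 0 ω, DB 0 1 ω, DB 1 0 ω, DB 1 1 ω)) μ)
    (honcA : ∀ z : ℝ, (z = 0 ∨ z = 1) → ∀ ω, DA 0 z ω = 0)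
    (honcB : ∀ z : ℝ, (z = 0 ∨ z = 1) → ∀ ω, DB z 0 ω = 0)
    (K : ℝ) (hK : 0 < K)
    (hbdd : ∀ d1 d2 : ℝ, (d1 = 0 ∨ d1 = 1) → (d2 = 0 ∨ d2 = 1) →
      ∀ᵐ ω ∂μ, 0 ≤ Y d1 d2 ω ∧ Y d1 d2 ω ≤ K)
    (hmtr10 : ∀ᵐ ω ∂μ, Y 0 0 ω ≤ Y 1 0 ω) (hmtr01 : ∀ᵐ ω ∂μ, Y 0 0 ω ≤ Y 0 1 ω)
    (CA CB : Set Ω) (hCA : CA = {ω | DA 1 1 ω = 1}) (hCB : CB = {ω | DB 1 1 ω = 1})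
    (hcc : 0 < μ (CA ∩ CB))
    (U L : ℝ)
    (hU : U = ((∫ ω, Y 0 0 ω ∂μ) -
      cexp μ (fun ω => Y 0 0 ω) (CAᶜ ∩ CBᶜ) * (μ (CAᶜ ∩ CBᶜ)).toReal) / (μ (CA ∩ CB)).toReal)
    (hL : L = U - (cexp μ (fun ω => Y 1 0 ω) (CA ∩ CBᶜ) * (μ (CA ∩ CBᶜ)).toReal +
      cexp μ (fun ω => Y 0 1 ω) (CAᶜ ∩ CB) * (μ (CAᶜ ∩ CB)).toReal) / (μ (CA ∩ CB)).toReal) :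
    L ≤ cexp μ (fun ω => Y 0 0 ω) (CA ∩ CB) ∧ cexp μ (fun ω => Y 0 0 ω) (CA ∩ CB) ≤ U :=
  stmt_11_general μ DA DB Y hDAm hDBm hYint K hbdd hmtr10 hmtr01 CA CB hCA hCB hcc U L hU hL
end

section
/- (Reduced-form interaction coefficient.) Under IV independence, one-sided noncompliance for both treatments, and the first-stage conditions, the coefficient π_{AB} := (E[Y|Z_A=1,Z_B=1]−E[Y|Z_A=0,Z_B=1]) − (E[Y|Z_A=1,Z_B=0]−E[Y|Z_A=0,Z_B=0]) satisfies π_{AB} = E[(Y(1,1)−Y(0,1)−Y(1,0)+Y(0,0))·1_{C_A∩C_B}] + E[(Y(1,0)−Y(0,0))·1_{J_A}] − E[(Y(1,0)−Y(0,0))·1_{Dd_A}] + E[(Y(0,1)−Y(0,0))·1_{J_B}] − E[(Y(0,1)−Y(0,0))·1_{Dd_B}], where C_A={D_A(1,1)=1}, J_A={D_A(1,0)=0, D_A(1,1)=1}, Dd_A={D_A(1,0)=1, D_A(1,1)=0}, and C_B, J_B, Dd_B are defined symmetrically. -/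
/-!
On the cell `{Z_A = a, Z_B = b}` the observed outcome is `Y (D_A a b) (D_B a b)`, a measurable
function of the potential outcomes and treatments, which are independent of the instruments; so
each cell mean of `Y` is the unconditional mean of `Y (D_A a b) (D_B a b)`. With one-sided
noncompliance the interaction contrast of the four cell means is therefore the mean of
`Y (D_A 1 1) (D_B 1 1) - Y 0 (D_B 0 1) - (Y (D_A 1 0) 0 - Y 0 0)`, and for binary treatments this
integrand splits pointwise into the five complier and defier terms, since
`D_A 1 1 - D_A 1 0 = 1_{J_A} - 1_{Dd_A}`.
-/

open MeasureTheory ProbabilityTheory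

section Independence

variable {Ω β : Type*} {mT mΩ : MeasurableSpace Ω} [MeasurableSpace β] {μ : Measure Ω}
  [IsFiniteMeasure μ]

theorem cexp_preimage_eq_integral_of_indep {Z : Ω → β} {X W : Ω → ℝ}
    (hindep : Indep (MeasurableSpace.comap Z inferInstance) mT μ) (hZ : Measurable Z)
    (hWT : Measurable[mT] W) (hW : Measurable W) {B : Set β} (hB : MeasurableSet B)
    (hpos : μ (Z ⁻¹' B) ≠ 0) (hXW : Set.EqOn X W (Z ⁻¹' B)) :
    cexp μ X (Z ⁻¹' B) = ∫ ω, W ω ∂μ := by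
  have hmul : ∫ ω in Z ⁻¹' B, W ω ∂μ = μ.real (Z ⁻¹' B) * ∫ ω, W ω ∂μ :=
    (indep_of_indep_of_le_right hindep hWT.comap_le).setIntegral_eq_mul (f := id) hZ.comap_le
      hW.aemeasurable ⟨B, hB, rfl⟩ aestronglyMeasurable_id
  rw [cexp, setIntegral_congr_fun (hZ hB) hXW, hmul]
  exact mul_div_cancel_left₀ _ (ENNReal.toReal_ne_zero.2 ⟨hpos, measure_ne_top μ _⟩)

end Independence

section Binary

theorem eq_bilinear_of_binary (y : ℝ → ℝ → ℝ) {d₁ d₂ : ℝ} (h₁ : d₁ = 0 ∨ d₁ = 1)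
    (h₂ : d₂ = 0 ∨ d₂ = 1) :
    y d₁ d₂ = y 0 0 + (y 1 0 - y 0 0) * d₁ + (y 0 1 - y 0 0) * d₂ +
      (y 1 1 - y 0 1 - y 1 0 + y 0 0) * (d₁ * d₂) := by
  rcases h₁ with rfl | rfl <;> rcases h₂ with rfl | rfl <;> ring

theorem abs_le_sum_abs_of_binary (y : ℝ → ℝ → ℝ) {d₁ d₂ : ℝ} (h₁ : d₁ = 0 ∨ d₁ = 1)
    (h₂ : d₂ = 0 ∨ d₂ = 1) :
    |y d₁ d₂| ≤ |y 0 0| + |y 0 1| + |y 1 0| + |y 1 1| := by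
  rcases h₁ with rfl | rfl <;> rcases h₂ with rfl | rfl <;>
    linarith [abs_nonneg (y 0 0), abs_nonneg (y 0 1), abs_nonneg (y 1 0), abs_nonneg (y 1 1)]

theorem interaction_contrast_eq_of_binary (y : ℝ → ℝ → ℝ) {a₁₀ a₁₁ b₀₁ b₁₁ : ℝ}
    (ha₁₀ : a₁₀ = 0 ∨ a₁₀ = 1) (ha₁₁ : a₁₁ = 0 ∨ a₁₁ = 1)
    (hb₀₁ : b₀₁ = 0 ∨ b₀₁ = 1) (hb₁₁ : b₁₁ = 0 ∨ b₁₁ = 1) :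
    y a₁₁ b₁₁ - y 0 b₀₁ - (y a₁₀ 0 - y 0 0) =
      (if a₁₁ = 1 ∧ b₁₁ = 1 then y 1 1 - y 0 1 - y 1 0 + y 0 0 else 0) +
      (if a₁₀ = 0 ∧ a₁₁ = 1 then y 1 0 - y 0 0 else 0) -
      (if a₁₀ = 1 ∧ a₁₁ = 0 then y 1 0 - y 0 0 else 0) +
      (if b₀₁ = 0 ∧ b₁₁ = 1 then y 0 1 - y 0 0 else 0) -
      (if b₀₁ = 1 ∧ b₁₁ = 0 then y 0 1 - y 0 0 else 0) := by
  rcases ha₁₀ with rfl | rfl <;> rcases ha₁₁ with rfl | rfl <;> rcases hb₀₁ with rfl | rfl <;>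
    rcases hb₁₁ with rfl | rfl <;> norm_num <;> ring

variable {Ω : Type*} {m : MeasurableSpace Ω} {Y : ℝ → ℝ → Ω → ℝ} {D₁ D₂ : Ω → ℝ}

theorem measurable_realizedOutcome_s15
    (hY : ∀ d₁ d₂ : ℝ, (d₁ = 0 ∨ d₁ = 1) → (d₂ = 0 ∨ d₂ = 1) → Measurable (Y d₁ d₂))
    (hD₁ : Measurable D₁) (hD₂ : Measurable D₂) (hD₁bin : ∀ ω, D₁ ω = 0 ∨ D₁ ω = 1)
    (hD₂bin : ∀ ω, D₂ ω = 0 ∨ D₂ ω = 1) :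
    Measurable fun ω => Y (D₁ ω) (D₂ ω) ω := by
  have h0 : (0 : ℝ) = 0 ∨ (0 : ℝ) = 1 := .inl rfl
  have h1 : (1 : ℝ) = 0 ∨ (1 : ℝ) = 1 := .inr rfl
  have hY₀₀ := hY 0 0 h0 h0
  have hY₀₁ := hY 0 1 h0 h1
  have hY₁₀ := hY 1 0 h1 h0
  have hY₁₁ := hY 1 1 h1 h1
  rw [funext fun ω => eq_bilinear_of_binary (fun d₁ d₂ => Y d₁ d₂ ω) (hD₁bin ω) (hD₂bin ω)]
  fun_prop

theorem integrable_realizedOutcome {μ : Measure Ω}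
    (hYm : ∀ d₁ d₂ : ℝ, (d₁ = 0 ∨ d₁ = 1) → (d₂ = 0 ∨ d₂ = 1) → Measurable (Y d₁ d₂))
    (hY : ∀ d₁ d₂ : ℝ, (d₁ = 0 ∨ d₁ = 1) → (d₂ = 0 ∨ d₂ = 1) → Integrable (Y d₁ d₂) μ)
    (hD₁ : Measurable D₁) (hD₂ : Measurable D₂) (hD₁bin : ∀ ω, D₁ ω = 0 ∨ D₁ ω = 1)
    (hD₂bin : ∀ ω, D₂ ω = 0 ∨ D₂ ω = 1) :
    Integrable (fun ω => Y (D₁ ω) (D₂ ω) ω) μ := by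
  have h0 : (0 : ℝ) = 0 ∨ (0 : ℝ) = 1 := .inl rfl
  have h1 : (1 : ℝ) = 0 ∨ (1 : ℝ) = 1 := .inr rfl
  refine Integrable.mono' ((((hY 0 0 h0 h0).abs.add (hY 0 1 h0 h1).abs).add
    (hY 1 0 h1 h0).abs).add (hY 1 1 h1 h1).abs)
    (measurable_realizedOutcome_s15 hYm hD₁ hD₂ hD₁bin hD₂bin).aestronglyMeasurable
    (.of_forall fun ω => ?_)
  exact abs_le_sum_abs_of_binary (fun d₁ d₂ => Y d₁ d₂ ω) (hD₁bin ω) (hD₂bin ω)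

end Binary

section Instruments

variable {Ω : Type*} [MeasurableSpace Ω] {μ : Measure Ω}
  {ZA ZB : Ω → ℝ} {DA DB : ℝ → ℝ → Ω → ℝ} {Y : ℝ → ℝ → Ω → ℝ}

theorem exists_indep_of_indepFun_potentials
    (hindep : IndepFun (fun ω => (ZA ω, ZB ω))
      (fun ω => (Y 0 0 ω, Y 0 1 ω, Y 1 0 ω, Y 1 1 ω,
        DA 0 0 ω, DA 0 1 ω, DA 1 0 ω, DA 1 1 ω,
        DB 0 0 ω, DB 0 1 ω, DB 1 0 ω, DB 1 1 ω)) μ) :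
    ∃ mT : MeasurableSpace Ω,
      Indep (MeasurableSpace.comap (fun ω => (ZA ω, ZB ω)) inferInstance) mT μ ∧
      (∀ d₁ d₂ : ℝ, (d₁ = 0 ∨ d₁ = 1) → (d₂ = 0 ∨ d₂ = 1) → Measurable[mT] (Y d₁ d₂)) ∧
      (∀ z₁ z₂ : ℝ, (z₁ = 0 ∨ z₁ = 1) → (z₂ = 0 ∨ z₂ = 1) → Measurable[mT] (DA z₁ z₂)) ∧
      (∀ z₁ z₂ : ℝ, (z₁ = 0 ∨ z₁ = 1) → (z₂ = 0 ∨ z₂ = 1) → Measurable[mT] (DB z₁ z₂)) := by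
  refine ⟨_, (IndepFun_iff_Indep _ _ _).1 hindep, ?_⟩
  have hY := comap_measurable (m := inferInstance) fun ω => (Y 0 0 ω, Y 0 1 ω, Y 1 0 ω, Y 1 1 ω,
    DA 0 0 ω, DA 0 1 ω, DA 1 0 ω, DA 1 1 ω, DB 0 0 ω, DB 0 1 ω, DB 1 0 ω, DB 1 1 ω)
  have hDA := hY.snd.snd.snd.snd
  have hDB := hDA.snd.snd.snd.snd
  refine ⟨?_, ?_, ?_⟩ <;> rintro _ _ (rfl | rfl) (rfl | rfl)
  exacts [hY.fst, hY.snd.fst, hY.snd.snd.fst, hY.snd.snd.snd.fst,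
    hDA.fst, hDA.snd.fst, hDA.snd.snd.fst, hDA.snd.snd.snd.fst,
    hDB.fst, hDB.snd.fst, hDB.snd.snd.fst, hDB.snd.snd.snd]

theorem cexp_cell_eq_integral [IsFiniteMeasure μ] {DAobs DBobs Yobs : Ω → ℝ}
    (hZA : Measurable ZA) (hZB : Measurable ZB)
    (hDAm : ∀ z₁ z₂ : ℝ, (z₁ = 0 ∨ z₁ = 1) → (z₂ = 0 ∨ z₂ = 1) → Measurable (DA z₁ z₂))
    (hDBm : ∀ z₁ z₂ : ℝ, (z₁ = 0 ∨ z₁ = 1) → (z₂ = 0 ∨ z₂ = 1) → Measurable (DB z₁ z₂))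
    (hDAbin : ∀ z₁ z₂ : ℝ, (z₁ = 0 ∨ z₁ = 1) → (z₂ = 0 ∨ z₂ = 1) →
      ∀ ω, DA z₁ z₂ ω = 0 ∨ DA z₁ z₂ ω = 1)
    (hDBbin : ∀ z₁ z₂ : ℝ, (z₁ = 0 ∨ z₁ = 1) → (z₂ = 0 ∨ z₂ = 1) →
      ∀ ω, DB z₁ z₂ ω = 0 ∨ DB z₁ z₂ ω = 1)
    (hYm : ∀ d₁ d₂ : ℝ, (d₁ = 0 ∨ d₁ = 1) → (d₂ = 0 ∨ d₂ = 1) → Measurable (Y d₁ d₂))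
    (hDAobs : ∀ ω, DAobs ω = DA (ZA ω) (ZB ω) ω) (hDBobs : ∀ ω, DBobs ω = DB (ZA ω) (ZB ω) ω)
    (hYobs : ∀ ω, Yobs ω = Y (DAobs ω) (DBobs ω) ω)
    (hindep : IndepFun (fun ω => (ZA ω, ZB ω))
      (fun ω => (Y 0 0 ω, Y 0 1 ω, Y 1 0 ω, Y 1 1 ω,
        DA 0 0 ω, DA 0 1 ω, DA 1 0 ω, DA 1 1 ω,
        DB 0 0 ω, DB 0 1 ω, DB 1 0 ω, DB 1 1 ω)) μ)
    {a b : ℝ} (ha : a = 0 ∨ a = 1) (hb : b = 0 ∨ b = 1)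
    (hpos : 0 < μ {ω | ZA ω = a ∧ ZB ω = b}) :
    cexp μ Yobs {ω | ZA ω = a ∧ ZB ω = b} = ∫ ω, Y (DA a b ω) (DB a b ω) ω ∂μ := by
  have hcell : {ω | ZA ω = a ∧ ZB ω = b} = (fun ω => (ZA ω, ZB ω)) ⁻¹' {(a, b)} := by
    ext; simp
  rw [hcell] at hpos ⊢
  obtain ⟨mT, hindep, hYT, hDAT, hDBT⟩ := exists_indep_of_indepFun_potentials hindep
  refine cexp_preimage_eq_integral_of_indep hindep (hZA.prodMk hZB)
    (measurable_realizedOutcome_s15 hYT (hDAT a b ha hb) (hDBT a b ha hb) (hDAbin a b ha hb)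
      (hDBbin a b ha hb))
    (measurable_realizedOutcome_s15 hYm (hDAm a b ha hb) (hDBm a b ha hb) (hDAbin a b ha hb)
      (hDBbin a b ha hb)) (measurableSet_singleton _) hpos.ne' fun ω hω => ?_
  obtain ⟨hA, hB⟩ := Prod.mk.inj hω
  rw [hYobs, hDAobs, hDBobs, hA, hB]

theorem integral_indicators_eq_setIntegrals
    (hDAm : ∀ z₁ z₂ : ℝ, (z₁ = 0 ∨ z₁ = 1) → (z₂ = 0 ∨ z₂ = 1) → Measurable (DA z₁ z₂))
    (hDBm : ∀ z₁ z₂ : ℝ, (z₁ = 0 ∨ z₁ = 1) → (z₂ = 0 ∨ z₂ = 1) → Measurable (DB z₁ z₂))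
    (hYint : ∀ d₁ d₂ : ℝ, (d₁ = 0 ∨ d₁ = 1) → (d₂ = 0 ∨ d₂ = 1) → Integrable (Y d₁ d₂) μ) :
    ∫ ω, (({ω | DA 1 1 ω = 1} ∩ {ω | DB 1 1 ω = 1}).indicator
          (fun ω => Y 1 1 ω - Y 0 1 ω - Y 1 0 ω + Y 0 0 ω) ω +
        {ω | DA 1 0 ω = 0 ∧ DA 1 1 ω = 1}.indicator (fun ω => Y 1 0 ω - Y 0 0 ω) ω -
        {ω | DA 1 0 ω = 1 ∧ DA 1 1 ω = 0}.indicator (fun ω => Y 1 0 ω - Y 0 0 ω) ω +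
        {ω | DB 0 1 ω = 0 ∧ DB 1 1 ω = 1}.indicator (fun ω => Y 0 1 ω - Y 0 0 ω) ω -
        {ω | DB 0 1 ω = 1 ∧ DB 1 1 ω = 0}.indicator (fun ω => Y 0 1 ω - Y 0 0 ω) ω) ∂μ =
      (∫ ω in {ω | DA 1 1 ω = 1} ∩ {ω | DB 1 1 ω = 1},
          (Y 1 1 ω - Y 0 1 ω - Y 1 0 ω + Y 0 0 ω) ∂μ) +
        (∫ ω in {ω | DA 1 0 ω = 0 ∧ DA 1 1 ω = 1}, (Y 1 0 ω - Y 0 0 ω) ∂μ) -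
        (∫ ω in {ω | DA 1 0 ω = 1 ∧ DA 1 1 ω = 0}, (Y 1 0 ω - Y 0 0 ω) ∂μ) +
        (∫ ω in {ω | DB 0 1 ω = 0 ∧ DB 1 1 ω = 1}, (Y 0 1 ω - Y 0 0 ω) ∂μ) -
        ∫ ω in {ω | DB 0 1 ω = 1 ∧ DB 1 1 ω = 0}, (Y 0 1 ω - Y 0 0 ω) ∂μ := by
  have h0 : (0 : ℝ) = 0 ∨ (0 : ℝ) = 1 := .inl rfl
  have h1 : (1 : ℝ) = 0 ∨ (1 : ℝ) = 1 := .inr rfl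
  have hA₁₀ := hDAm 1 0 h1 h0
  have hA₁₁ := hDAm 1 1 h1 h1
  have hB₀₁ := hDBm 0 1 h0 h1
  have hB₁₁ := hDBm 1 1 h1 h1
  have hCC : MeasurableSet ({ω | DA 1 1 ω = 1} ∩ {ω | DB 1 1 ω = 1}) :=
    (hA₁₁ (measurableSet_singleton 1)).inter (hB₁₁ (measurableSet_singleton 1))
  have hJA : MeasurableSet {ω | DA 1 0 ω = 0 ∧ DA 1 1 ω = 1} :=
    (hA₁₀ (measurableSet_singleton 0)).inter (hA₁₁ (measurableSet_singleton 1))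
  have hDdA : MeasurableSet {ω | DA 1 0 ω = 1 ∧ DA 1 1 ω = 0} :=
    (hA₁₀ (measurableSet_singleton 1)).inter (hA₁₁ (measurableSet_singleton 0))
  have hJB : MeasurableSet {ω | DB 0 1 ω = 0 ∧ DB 1 1 ω = 1} :=
    (hB₀₁ (measurableSet_singleton 0)).inter (hB₁₁ (measurableSet_singleton 1))
  have hDdB : MeasurableSet {ω | DB 0 1 ω = 1 ∧ DB 1 1 ω = 0} :=
    (hB₀₁ (measurableSet_singleton 1)).inter (hB₁₁ (measurableSet_singleton 0))
  have hY₀₀ := hYint 0 0 h0 h0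
  have hY₀₁ := hYint 0 1 h0 h1
  have hY₁₀ := hYint 1 0 h1 h0
  have hY₁₁ := hYint 1 1 h1 h1
  have hCCi := (((hY₁₁.sub hY₀₁).sub hY₁₀).add hY₀₀).indicator hCC
  have hJAi := (hY₁₀.sub hY₀₀).indicator hJA
  have hDdAi := (hY₁₀.sub hY₀₀).indicator hDdA
  have hJBi := (hY₀₁.sub hY₀₀).indicator hJB
  have hDdBi := (hY₀₁.sub hY₀₀).indicator hDdB
  rw [integral_sub, integral_add, integral_sub, integral_add, integral_indicator hCC,
    integral_indicator hJA, integral_indicator hDdA, integral_indicator hJB,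
    integral_indicator hDdB]
  all_goals fun_prop

theorem interaction_contrast_decomposition
    (hDAm : ∀ z₁ z₂ : ℝ, (z₁ = 0 ∨ z₁ = 1) → (z₂ = 0 ∨ z₂ = 1) → Measurable (DA z₁ z₂))
    (hDBm : ∀ z₁ z₂ : ℝ, (z₁ = 0 ∨ z₁ = 1) → (z₂ = 0 ∨ z₂ = 1) → Measurable (DB z₁ z₂))
    (hDAbin : ∀ z₁ z₂ : ℝ, (z₁ = 0 ∨ z₁ = 1) → (z₂ = 0 ∨ z₂ = 1) →
      ∀ ω, DA z₁ z₂ ω = 0 ∨ DA z₁ z₂ ω = 1)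
    (hDBbin : ∀ z₁ z₂ : ℝ, (z₁ = 0 ∨ z₁ = 1) → (z₂ = 0 ∨ z₂ = 1) →
      ∀ ω, DB z₁ z₂ ω = 0 ∨ DB z₁ z₂ ω = 1)
    (hYm : ∀ d₁ d₂ : ℝ, (d₁ = 0 ∨ d₁ = 1) → (d₂ = 0 ∨ d₂ = 1) → Measurable (Y d₁ d₂))
    (hYint : ∀ d₁ d₂ : ℝ, (d₁ = 0 ∨ d₁ = 1) → (d₂ = 0 ∨ d₂ = 1) → Integrable (Y d₁ d₂) μ)
    (honcA : ∀ z : ℝ, (z = 0 ∨ z = 1) → ∀ ω, DA 0 z ω = 0)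
    (honcB : ∀ z : ℝ, (z = 0 ∨ z = 1) → ∀ ω, DB z 0 ω = 0) :
    (∫ ω, Y (DA 1 1 ω) (DB 1 1 ω) ω ∂μ - ∫ ω, Y (DA 0 1 ω) (DB 0 1 ω) ω ∂μ) -
        (∫ ω, Y (DA 1 0 ω) (DB 1 0 ω) ω ∂μ - ∫ ω, Y (DA 0 0 ω) (DB 0 0 ω) ω ∂μ) =
      (∫ ω in {ω | DA 1 1 ω = 1} ∩ {ω | DB 1 1 ω = 1},
          (Y 1 1 ω - Y 0 1 ω - Y 1 0 ω + Y 0 0 ω) ∂μ) +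
        (∫ ω in {ω | DA 1 0 ω = 0 ∧ DA 1 1 ω = 1}, (Y 1 0 ω - Y 0 0 ω) ∂μ) -
        (∫ ω in {ω | DA 1 0 ω = 1 ∧ DA 1 1 ω = 0}, (Y 1 0 ω - Y 0 0 ω) ∂μ) +
        (∫ ω in {ω | DB 0 1 ω = 0 ∧ DB 1 1 ω = 1}, (Y 0 1 ω - Y 0 0 ω) ∂μ) -
        ∫ ω in {ω | DB 0 1 ω = 1 ∧ DB 1 1 ω = 0}, (Y 0 1 ω - Y 0 0 ω) ∂μ := by
  have h0 : (0 : ℝ) = 0 ∨ (0 : ℝ) = 1 := .inl rfl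
  have h1 : (1 : ℝ) = 0 ∨ (1 : ℝ) = 1 := .inr rfl
  have hint : ∀ a b : ℝ, (a = 0 ∨ a = 1) → (b = 0 ∨ b = 1) →
      Integrable (fun ω => Y (DA a b ω) (DB a b ω) ω) μ := fun a b ha hb =>
    integrable_realizedOutcome hYm hYint (hDAm a b ha hb) (hDBm a b ha hb) (hDAbin a b ha hb)
      (hDBbin a b ha hb)
  rw [← integral_indicators_eq_setIntegrals hDAm hDBm hYint,
    ← integral_sub (hint 1 1 h1 h1) (hint 0 1 h0 h1),
    ← integral_sub (hint 1 0 h1 h0) (hint 0 0 h0 h0),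
    ← integral_sub ((hint 1 1 h1 h1).sub' (hint 0 1 h0 h1))
      ((hint 1 0 h1 h0).sub' (hint 0 0 h0 h0))]
  refine integral_congr_ae (.of_forall fun ω => ?_)
  simp only [Set.indicator_apply, Set.mem_inter_iff, Set.mem_ofPred_eq, honcA 0 h0 ω,
    honcA 1 h1 ω, honcB 0 h0 ω, honcB 1 h1 ω]
  exact interaction_contrast_eq_of_binary (fun d₁ d₂ => Y d₁ d₂ ω) (hDAbin 1 0 h1 h0 ω)
    (hDAbin 1 1 h1 h1 ω) (hDBbin 0 1 h0 h1 ω) (hDBbin 1 1 h1 h1 ω)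

end Instruments

theorem stmt_15_general {Ω : Type*} [MeasurableSpace Ω] (μ : Measure Ω) [IsProbabilityMeasure μ]
    (ZA ZB : Ω → ℝ) (DA DB : ℝ → ℝ → Ω → ℝ) (Y : ℝ → ℝ → Ω → ℝ)
    (DAobs DBobs Yobs : Ω → ℝ)
    (hZAm : Measurable ZA) (hZBm : Measurable ZB)
    (hDAm : ∀ z1 z2 : ℝ, (z1 = 0 ∨ z1 = 1) → (z2 = 0 ∨ z2 = 1) → Measurable (DA z1 z2))
    (hDBm : ∀ z1 z2 : ℝ, (z1 = 0 ∨ z1 = 1) → (z2 = 0 ∨ z2 = 1) → Measurable (DB z1 z2))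
    (hDAbin : ∀ z1 z2 : ℝ, (z1 = 0 ∨ z1 = 1) → (z2 = 0 ∨ z2 = 1) →
      ∀ ω, DA z1 z2 ω = 0 ∨ DA z1 z2 ω = 1)
    (hDBbin : ∀ z1 z2 : ℝ, (z1 = 0 ∨ z1 = 1) → (z2 = 0 ∨ z2 = 1) →
      ∀ ω, DB z1 z2 ω = 0 ∨ DB z1 z2 ω = 1)
    (hYm : ∀ d1 d2 : ℝ, (d1 = 0 ∨ d1 = 1) → (d2 = 0 ∨ d2 = 1) → Measurable (Y d1 d2))
    (hYint : ∀ d1 d2 : ℝ, (d1 = 0 ∨ d1 = 1) → (d2 = 0 ∨ d2 = 1) → Integrable (Y d1 d2) μ)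
    (hDAobs : ∀ ω, DAobs ω = DA (ZA ω) (ZB ω) ω)
    (hDBobs : ∀ ω, DBobs ω = DB (ZA ω) (ZB ω) ω)
    (hYobs : ∀ ω, Yobs ω = Y (DAobs ω) (DBobs ω) ω)
    (hindep : IndepFun (fun ω => (ZA ω, ZB ω))
      (fun ω => (Y 0 0 ω, Y 0 1 ω, Y 1 0 ω, Y 1 1 ω,
        DA 0 0 ω, DA 0 1 ω, DA 1 0 ω, DA 1 1 ω,
        DB 0 0 ω, DB 0 1 ω, DB 1 0 ω, DB 1 1 ω)) μ)
    (honcA : ∀ z : ℝ, (z = 0 ∨ z = 1) → ∀ ω, DA 0 z ω = 0)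
    (honcB : ∀ z : ℝ, (z = 0 ∨ z = 1) → ∀ ω, DB z 0 ω = 0)
    (hz00 : 0 < μ {ω | ZA ω = 0 ∧ ZB ω = 0}) (hz01 : 0 < μ {ω | ZA ω = 0 ∧ ZB ω = 1})
    (hz10 : 0 < μ {ω | ZA ω = 1 ∧ ZB ω = 0}) (hz11 : 0 < μ {ω | ZA ω = 1 ∧ ZB ω = 1})
    (CA CB JA JB DdA DdB : Set Ω)
    (hCA : CA = {ω | DA 1 1 ω = 1}) (hCB : CB = {ω | DB 1 1 ω = 1})
    (hJA : JA = {ω | DA 1 0 ω = 0 ∧ DA 1 1 ω = 1})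
    (hDdA : DdA = {ω | DA 1 0 ω = 1 ∧ DA 1 1 ω = 0})
    (hJB : JB = {ω | DB 0 1 ω = 0 ∧ DB 1 1 ω = 1})
    (hDdB : DdB = {ω | DB 0 1 ω = 1 ∧ DB 1 1 ω = 0})
    (πAB : ℝ)
    (hπ : πAB = (cexp μ Yobs {ω | ZA ω = 1 ∧ ZB ω = 1} -
        cexp μ Yobs {ω | ZA ω = 0 ∧ ZB ω = 1}) -
      (cexp μ Yobs {ω | ZA ω = 1 ∧ ZB ω = 0} -
        cexp μ Yobs {ω | ZA ω = 0 ∧ ZB ω = 0})) :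
    πAB = (∫ ω in CA ∩ CB, (Y 1 1 ω - Y 0 1 ω - Y 1 0 ω + Y 0 0 ω) ∂μ) +
      (∫ ω in JA, (Y 1 0 ω - Y 0 0 ω) ∂μ) - (∫ ω in DdA, (Y 1 0 ω - Y 0 0 ω) ∂μ) +
        (∫ ω in JB, (Y 0 1 ω - Y 0 0 ω) ∂μ) - ∫ ω in DdB, (Y 0 1 ω - Y 0 0 ω) ∂μ := by
  have h0 : (0 : ℝ) = 0 ∨ (0 : ℝ) = 1 := .inl rfl
  have h1 : (1 : ℝ) = 0 ∨ (1 : ℝ) = 1 := .inr rfl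
  have hcell := fun a b ha hb hpos => cexp_cell_eq_integral (Yobs := Yobs) hZAm hZBm hDAm hDBm
    hDAbin hDBbin hYm hDAobs hDBobs hYobs hindep (a := a) (b := b) ha hb hpos
  subst hCA hCB hJA hDdA hJB hDdB
  rw [hπ, hcell 1 1 h1 h1 hz11, hcell 0 1 h0 h1 hz01, hcell 1 0 h1 h0 hz10,
    hcell 0 0 h0 h0 hz00]
  exact interaction_contrast_decomposition hDAm hDBm hDAbin hDBbin hYm hYint honcA honcB

theorem stmt_15 {Ω : Type*} [MeasurableSpace Ω] (μ : Measure Ω) [IsProbabilityMeasure μ]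
    (ZA ZB : Ω → ℝ) (DA DB : ℝ → ℝ → Ω → ℝ) (Y : ℝ → ℝ → Ω → ℝ)
    (DAobs DBobs Yobs : Ω → ℝ)
    (hZAm : Measurable ZA) (hZBm : Measurable ZB)
    (hZAbin : ∀ ω, ZA ω = 0 ∨ ZA ω = 1) (hZBbin : ∀ ω, ZB ω = 0 ∨ ZB ω = 1)
    (hDAm : ∀ z1 z2 : ℝ, (z1 = 0 ∨ z1 = 1) → (z2 = 0 ∨ z2 = 1) → Measurable (DA z1 z2))
    (hDBm : ∀ z1 z2 : ℝ, (z1 = 0 ∨ z1 = 1) → (z2 = 0 ∨ z2 = 1) → Measurable (DB z1 z2))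
    (hDAbin : ∀ z1 z2 : ℝ, (z1 = 0 ∨ z1 = 1) → (z2 = 0 ∨ z2 = 1) →
      ∀ ω, DA z1 z2 ω = 0 ∨ DA z1 z2 ω = 1)
    (hDBbin : ∀ z1 z2 : ℝ, (z1 = 0 ∨ z1 = 1) → (z2 = 0 ∨ z2 = 1) →
      ∀ ω, DB z1 z2 ω = 0 ∨ DB z1 z2 ω = 1)
    (hYm : ∀ d1 d2 : ℝ, (d1 = 0 ∨ d1 = 1) → (d2 = 0 ∨ d2 = 1) → Measurable (Y d1 d2))
    (hYint : ∀ d1 d2 : ℝ, (d1 = 0 ∨ d1 = 1) → (d2 = 0 ∨ d2 = 1) → Integrable (Y d1 d2) μ)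
    (hDAobs : ∀ ω, DAobs ω = DA (ZA ω) (ZB ω) ω)
    (hDBobs : ∀ ω, DBobs ω = DB (ZA ω) (ZB ω) ω)
    (hYobs : ∀ ω, Yobs ω = Y (DAobs ω) (DBobs ω) ω)
    (hindep : IndepFun (fun ω => (ZA ω, ZB ω))
      (fun ω => (Y 0 0 ω, Y 0 1 ω, Y 1 0 ω, Y 1 1 ω,
        DA 0 0 ω, DA 0 1 ω, DA 1 0 ω, DA 1 1 ω,
        DB 0 0 ω, DB 0 1 ω, DB 1 0 ω, DB 1 1 ω)) μ)
    (honcA : ∀ z : ℝ, (z = 0 ∨ z = 1) → ∀ ω, DA 0 z ω = 0)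
    (honcB : ∀ z : ℝ, (z = 0 ∨ z = 1) → ∀ ω, DB z 0 ω = 0)
    (hz00 : 0 < μ {ω | ZA ω = 0 ∧ ZB ω = 0}) (hz01 : 0 < μ {ω | ZA ω = 0 ∧ ZB ω = 1})
    (hz10 : 0 < μ {ω | ZA ω = 1 ∧ ZB ω = 0}) (hz11 : 0 < μ {ω | ZA ω = 1 ∧ ZB ω = 1})
    (CA CB JA JB DdA DdB : Set Ω)
    (hCA : CA = {ω | DA 1 1 ω = 1}) (hCB : CB = {ω | DB 1 1 ω = 1})
    (hJA : JA = {ω | DA 1 0 ω = 0 ∧ DA 1 1 ω = 1})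
    (hDdA : DdA = {ω | DA 1 0 ω = 1 ∧ DA 1 1 ω = 0})
    (hJB : JB = {ω | DB 0 1 ω = 0 ∧ DB 1 1 ω = 1})
    (hDdB : DdB = {ω | DB 0 1 ω = 1 ∧ DB 1 1 ω = 0})
    (πAB : ℝ)
    (hπ : πAB = (cexp μ Yobs {ω | ZA ω = 1 ∧ ZB ω = 1} -
        cexp μ Yobs {ω | ZA ω = 0 ∧ ZB ω = 1}) -
      (cexp μ Yobs {ω | ZA ω = 1 ∧ ZB ω = 0} -
        cexp μ Yobs {ω | ZA ω = 0 ∧ ZB ω = 0})) :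
    πAB = (∫ ω in CA ∩ CB, (Y 1 1 ω - Y 0 1 ω - Y 1 0 ω + Y 0 0 ω) ∂μ) +
      (∫ ω in JA, (Y 1 0 ω - Y 0 0 ω) ∂μ) - (∫ ω in DdA, (Y 1 0 ω - Y 0 0 ω) ∂μ) +
        (∫ ω in JB, (Y 0 1 ω - Y 0 0 ω) ∂μ) - ∫ ω in DdB, (Y 0 1 ω - Y 0 0 ω) ∂μ :=
  stmt_15_general μ ZA ZB DA DB Y DAobs DBobs Yobs hZAm hZBm hDAm hDBm hDAbin hDBbin hYm hYint
    hDAobs hDBobs hYobs hindep honcA honcB hz00 hz01 hz10 hz11 CA CB JA JB DdA DdB hCA hCB hJA hDdA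
    hJB hDdB πAB hπ
end

section
/- (Testable implication of no cross-defiers.) Under IV independence and one-sided noncompliance, if P(D_A(1,0)=1, D_A(1,1)=0)=0 (no cross-defiers for treatment A), then E[D_A | Z_A=1, Z_B=1] ≥ E[D_A | Z_A=1, Z_B=0]. Equivalently, if E[D_A|Z_A=1,Z_B=1] < E[D_A|Z_A=1,Z_B=0], then cross-defiers exist with positive probability. -/
/-!
Independence of `(Z_A, Z_B)` from the potential treatments means that conditioning on
`(Z_A, Z_B) = (1, b)` does not change the law of `D_A(1, b)`, which is the observed treatment
on that event; so the two conditional means are `P(D_A(1,0) = 1)` and `P(D_A(1,1) = 1)`.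
Without cross-defiers, `{D_A(1,0) = 1} ⊆ {D_A(1,1) = 1}` up to a null set.
-/

open MeasureTheory ProbabilityTheory

lemma eq_indicator_setOf_eq_one {Ω : Type*} {f : Ω → ℝ} (hf : ∀ ω, f ω = 0 ∨ f ω = 1) :
    f = {ω | f ω = 1}.indicator fun _ => 1 := by
  funext ω
  rcases hf ω with h | h <;> simp [h]

section

variable {Ω α β : Type*} [MeasurableSpace Ω] [MeasurableSpace α] [MeasurableSpace β]
  {μ : Measure Ω}

lemma cexp_preimage_eq_measureReal_of_indepFun [IsFiniteMeasure μ] {Z : Ω → α} {W : Ω → β}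
    (hindep : IndepFun Z W μ) (hZ : Measurable Z) (hW : Measurable W)
    {g : β → ℝ} (hg : Measurable g) (hbin : ∀ ω, g (W ω) = 0 ∨ g (W ω) = 1)
    {s : Set α} (hs : MeasurableSet s) (hpos : μ (Z ⁻¹' s) ≠ 0)
    {Y : Ω → ℝ} (hY : Set.EqOn Y (fun ω => g (W ω)) (Z ⁻¹' s)) :
    cexp μ Y (Z ⁻¹' s) = μ.real {ω | g (W ω) = 1} := by
  have hT : MeasurableSet {ω | g (W ω) = 1} := (hg.comp hW) (measurableSet_singleton 1)
  have hprod : μ.real (Z ⁻¹' s ∩ {ω | g (W ω) = 1})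
      = μ.real (Z ⁻¹' s) * μ.real {ω | g (W ω) = 1} := by
    simp only [measureReal_def, ← ENNReal.toReal_mul]
    exact congrArg ENNReal.toReal
      (hindep.measure_inter_preimage_eq_mul s (g ⁻¹' {1}) hs (hg (measurableSet_singleton 1)))
  have hne : μ.real (Z ⁻¹' s) ≠ 0 := (measureReal_ne_zero_iff).2 hpos
  have hY' : Set.EqOn Y ({ω | g (W ω) = 1}.indicator fun _ => 1) (Z ⁻¹' s) := fun ω hω =>
    (hY hω).trans (congrFun (eq_indicator_setOf_eq_one hbin) ω)
  rw [cexp, setIntegral_congr_fun (hZ hs) hY', setIntegral_indicator hT, setIntegral_const,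
    smul_eq_mul, mul_one, ← measureReal_def, hprod]
  field_simp

lemma measureReal_setOf_eq_one_le [IsFiniteMeasure μ] {f g : Ω → ℝ}
    (hg : ∀ ω, g ω = 0 ∨ g ω = 1) (hnull : μ {ω | f ω = 1 ∧ g ω = 0} = 0) :
    μ.real {ω | f ω = 1} ≤ μ.real {ω | g ω = 1} := by
  have hsdiff : μ ({ω | f ω = 1} \ {ω | g ω = 1}) = 0 :=
    measure_mono_null (by rintro ω ⟨hf, hg1⟩; exact ⟨hf, (hg ω).resolve_right hg1⟩) hnull
  exact ENNReal.toReal_mono (measure_ne_top μ _) (measure_mono_ae (ae_le_set.2 hsdiff))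

end

theorem stmt_18_general {Ω : Type*} [MeasurableSpace Ω] (μ : Measure Ω) [IsProbabilityMeasure μ]
    (ZA ZB : Ω → ℝ) (DA : ℝ → ℝ → Ω → ℝ) (DAobs : Ω → ℝ)
    (hZAm : Measurable ZA) (hZBm : Measurable ZB)
    (hDAm : ∀ z1 z2 : ℝ, (z1 = 0 ∨ z1 = 1) → (z2 = 0 ∨ z2 = 1) → Measurable (DA z1 z2))
    (hDAbin : ∀ z1 z2 : ℝ, (z1 = 0 ∨ z1 = 1) → (z2 = 0 ∨ z2 = 1) →
      ∀ ω, DA z1 z2 ω = 0 ∨ DA z1 z2 ω = 1)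
    (hDAobs : ∀ ω, DAobs ω = DA (ZA ω) (ZB ω) ω)
    (hindep : IndepFun (fun ω => (ZA ω, ZB ω))
      (fun ω => (DA 0 0 ω, DA 0 1 ω, DA 1 0 ω, DA 1 1 ω)) μ)
    (hz11 : 0 < μ {ω | ZA ω = 1 ∧ ZB ω = 1})
    (hz10 : 0 < μ {ω | ZA ω = 1 ∧ ZB ω = 0})
    (hnocd : μ {ω | DA 1 0 ω = 1 ∧ DA 1 1 ω = 0} = 0) :
    cexp μ DAobs {ω | ZA ω = 1 ∧ ZB ω = 0} ≤ cexp μ DAobs {ω | ZA ω = 1 ∧ ZB ω = 1} := by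
  have hZ : Measurable fun ω => (ZA ω, ZB ω) := hZAm.prodMk hZBm
  have hW : Measurable fun ω => (DA 0 0 ω, DA 0 1 ω, DA 1 0 ω, DA 1 1 ω) := by
    refine (hDAm 0 0 ?_ ?_).prodMk ((hDAm 0 1 ?_ ?_).prodMk
      ((hDAm 1 0 ?_ ?_).prodMk (hDAm 1 1 ?_ ?_))) <;> norm_num
  have hE : ∀ b : ℝ, {ω | ZA ω = 1 ∧ ZB ω = b} = (fun ω => (ZA ω, ZB ω)) ⁻¹' {(1, b)} := by
    intro b; ext; simp
  have hswitch : ∀ b : ℝ, Set.EqOn DAobs (DA 1 b) ((fun ω => (ZA ω, ZB ω)) ⁻¹' {(1, b)}) := by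
    intro b ω hω
    simp only [Set.mem_preimage, Set.mem_singleton_iff, Prod.mk.injEq] at hω
    rw [hDAobs, hω.1, hω.2]
  simp only [hE] at hz10 hz11 ⊢
  rw [cexp_preimage_eq_measureReal_of_indepFun hindep hZ hW measurable_snd.snd.fst
      (hDAbin 1 0 (by norm_num) (by norm_num)) (measurableSet_singleton _) hz10.ne' (hswitch 0),
    cexp_preimage_eq_measureReal_of_indepFun hindep hZ hW measurable_snd.snd.snd
      (hDAbin 1 1 (by norm_num) (by norm_num)) (measurableSet_singleton _) hz11.ne' (hswitch 1)]
  exact measureReal_setOf_eq_one_le (hDAbin 1 1 (by norm_num) (by norm_num)) hnocd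

theorem stmt_18 {Ω : Type*} [MeasurableSpace Ω] (μ : Measure Ω) [IsProbabilityMeasure μ]
    (ZA ZB : Ω → ℝ) (DA : ℝ → ℝ → Ω → ℝ) (DAobs : Ω → ℝ)
    (hZAm : Measurable ZA) (hZBm : Measurable ZB)
    (hZAbin : ∀ ω, ZA ω = 0 ∨ ZA ω = 1) (hZBbin : ∀ ω, ZB ω = 0 ∨ ZB ω = 1)
    (hDAm : ∀ z1 z2 : ℝ, (z1 = 0 ∨ z1 = 1) → (z2 = 0 ∨ z2 = 1) → Measurable (DA z1 z2))
    (hDAbin : ∀ z1 z2 : ℝ, (z1 = 0 ∨ z1 = 1) → (z2 = 0 ∨ z2 = 1) →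
      ∀ ω, DA z1 z2 ω = 0 ∨ DA z1 z2 ω = 1)
    (hDAobs : ∀ ω, DAobs ω = DA (ZA ω) (ZB ω) ω)
    (honcA : ∀ z : ℝ, (z = 0 ∨ z = 1) → ∀ ω, DA 0 z ω = 0)
    (hindep : IndepFun (fun ω => (ZA ω, ZB ω))
      (fun ω => (DA 0 0 ω, DA 0 1 ω, DA 1 0 ω, DA 1 1 ω)) μ)
    (hz11 : 0 < μ {ω | ZA ω = 1 ∧ ZB ω = 1})
    (hz10 : 0 < μ {ω | ZA ω = 1 ∧ ZB ω = 0})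
    (hnocd : μ {ω | DA 1 0 ω = 1 ∧ DA 1 1 ω = 0} = 0) :
    cexp μ DAobs {ω | ZA ω = 1 ∧ ZB ω = 0} ≤ cexp μ DAobs {ω | ZA ω = 1 ∧ ZB ω = 1} :=
  stmt_18_general μ ZA ZB DA DAobs hZAm hZBm hDAm hDAbin hDAobs hindep hz11 hz10 hnocd
end

section
/- (Bound on E[Y(1,0)|(c,c)] without cross-defiers for A.) Suppose additionally P(D_A(1,0)=1, D_A(1,1)=0)=0 (no A cross-defiers) and 0 ≤ Y(1,0) ≤ K a.s. Then E[Y(1,0)|C_A∩C_B] ≥ (E[Y(1,0)·1_{S_A}] − E[Y(1,0)·1_{C_A∩C_B^c}])/P(C_A∩C_B) and E[Y(1,0)|C_A∩C_B] ≤ (E[Y(1,0)·1_{S_A}] − E[Y(1,0)·1_{C_A∩C_B^c}] + K·P(J_A))/P(C_A∩C_B), where S_A={D_A(1,0)=1}, J_A={D_A(1,0)=0, D_A(1,1)=1}, C_A={D_A(1,1)=1}, C_B={D_B(1,1)=1}. -/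
/-!
Without cross-defiers the starters `S_A` are (up to a null set) compliers with `A`, so the
compliers `C_A` split into `S_A` and the joiners `J_A = C_A \ S_A`. Splitting `C_A` also along
`C_B` gives `E[Y·1_{C_A∩C_B}] = E[Y·1_{S_A}] - E[Y·1_{C_A∩C_Bᶜ}] + E[Y·1_{J_A}]`, and the last
term lies in `[0, K·P(J_A)]` because `0 ≤ Y ≤ K`.
-/

open MeasureTheory ProbabilityTheory

section SetIntegral

variable {Ω : Type*} [MeasurableSpace Ω] {μ : Measure Ω} {f : Ω → ℝ}

theorem setIntegral_inter_eq_sub_add {S C B : Set Ω} (hS : MeasurableSet S)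
    (hB : MeasurableSet B) (hf : IntegrableOn f C μ) (hSC : S ≤ᵐ[μ] C) :
    ∫ x in C ∩ B, f x ∂μ = ∫ x in S, f x ∂μ - ∫ x in C \ B, f x ∂μ + ∫ x in C \ S, f x ∂μ := by
  have hCS : (C ∩ S : Set Ω) =ᵐ[μ] S :=
    ae_eq_set.2 ⟨by simp [Set.sdiff_eq_empty.2 Set.inter_subset_right],
      by rwa [Set.sdiff_inter, Set.sdiff_self, Set.union_empty, ← ae_le_set]⟩
  have splitB := integral_inter_add_sdiff hB hf
  have splitS := integral_inter_add_sdiff hS hf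
  rw [setIntegral_congr_set hCS] at splitS
  linarith

theorem setIntegral_le_mul_measureReal [IsFiniteMeasure μ] (s : Set Ω) {K : ℝ}
    (hf : ∀ᵐ x ∂μ, 0 ≤ f x ∧ f x ≤ K) :
    ∫ x in s, f x ∂μ ≤ K * μ.real s := by
  refine (Real.le_norm_self _).trans
    (norm_setIntegral_le_of_norm_le_const_ae (measure_lt_top μ s) ?_)
  filter_upwards [ae_restrict_of_ae hf] with x ⟨h0, hK⟩
  rwa [Real.norm_eq_abs, abs_of_nonneg h0]

end SetIntegral

section BinaryIndicators

variable {Ω : Type*} {d e : Ω → ℝ}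

theorem setOf_eq_one_sdiff_setOf_eq_one (hd : ∀ ω, d ω = 0 ∨ d ω = 1) :
    {ω | e ω = 1} \ {ω | d ω = 1} = {ω | d ω = 0 ∧ e ω = 1} := by
  ext ω
  rcases hd ω with h | h <;> simp [h]

theorem setOf_eq_one_ae_le [MeasurableSpace Ω] {μ : Measure Ω} (he : ∀ ω, e ω = 0 ∨ e ω = 1)
    (hde : μ {ω | d ω = 1 ∧ e ω = 0} = 0) :
    {ω | d ω = 1} ≤ᵐ[μ] {ω | e ω = 1} := by
  refine ae_le_set.2 (measure_mono_null ?_ hde)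
  rintro ω ⟨hd, hne⟩
  exact ⟨hd, (he ω).resolve_right hne⟩

end BinaryIndicators

theorem stmt_19_general {Ω : Type*} [MeasurableSpace Ω] (μ : Measure Ω) [IsProbabilityMeasure μ]
    (DA DB : ℝ → ℝ → Ω → ℝ) (Y10 : Ω → ℝ) (K : ℝ)
    (hDAm : ∀ z1 z2 : ℝ, (z1 = 0 ∨ z1 = 1) → (z2 = 0 ∨ z2 = 1) → Measurable (DA z1 z2))
    (hDBm : ∀ z1 z2 : ℝ, (z1 = 0 ∨ z1 = 1) → (z2 = 0 ∨ z2 = 1) → Measurable (DB z1 z2))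
    (hDAbin : ∀ z1 z2 : ℝ, (z1 = 0 ∨ z1 = 1) → (z2 = 0 ∨ z2 = 1) →
      ∀ ω, DA z1 z2 ω = 0 ∨ DA z1 z2 ω = 1)
    (hnocd : μ {ω | DA 1 0 ω = 1 ∧ DA 1 1 ω = 0} = 0)
    (hY10int : Integrable Y10 μ)
    (hY10bdd : ∀ᵐ ω ∂μ, 0 ≤ Y10 ω ∧ Y10 ω ≤ K)
    (SA JA CA CB : Set Ω)
    (hSA : SA = {ω | DA 1 0 ω = 1}) (hJA : JA = {ω | DA 1 0 ω = 0 ∧ DA 1 1 ω = 1})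
    (hCA : CA = {ω | DA 1 1 ω = 1}) (hCB : CB = {ω | DB 1 1 ω = 1}) :
    ((∫ ω in SA, Y10 ω ∂μ) - ∫ ω in CA ∩ CBᶜ, Y10 ω ∂μ) / (μ (CA ∩ CB)).toReal ≤
        cexp μ Y10 (CA ∩ CB) ∧
      cexp μ Y10 (CA ∩ CB) ≤
        ((∫ ω in SA, Y10 ω ∂μ) - (∫ ω in CA ∩ CBᶜ, Y10 ω ∂μ) + K * (μ JA).toReal) /
          (μ (CA ∩ CB)).toReal := by
  have hSC : SA ≤ᵐ[μ] CA := hSA ▸ hCA ▸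
    setOf_eq_one_ae_le (hDAbin 1 1 (.inr rfl) (.inr rfl)) hnocd
  have hJA' : CA \ SA = JA := hSA ▸ hCA ▸ hJA ▸
    setOf_eq_one_sdiff_setOf_eq_one (hDAbin 1 0 (.inr rfl) (.inl rfl))
  have hSm : MeasurableSet SA := hSA ▸ hDAm 1 0 (.inr rfl) (.inl rfl) (measurableSet_singleton 1)
  have hBm : MeasurableSet CB := hCB ▸ hDBm 1 1 (.inr rfl) (.inr rfl) (measurableSet_singleton 1)
  have key := setIntegral_inter_eq_sub_add hSm hBm hY10int.integrableOn hSC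
  rw [hJA', Set.sdiff_eq] at key
  have hJ_nonneg : 0 ≤ ∫ ω in JA, Y10 ω ∂μ :=
    setIntegral_nonneg_of_ae_restrict (ae_restrict_of_ae (hY10bdd.mono fun _ h ↦ h.1))
  have hJ_le := setIntegral_le_mul_measureReal JA hY10bdd
  rw [measureReal_def] at hJ_le
  unfold cexp
  constructor <;> gcongr <;> linarith

theorem stmt_19 {Ω : Type*} [MeasurableSpace Ω] (μ : Measure Ω) [IsProbabilityMeasure μ]
    (DA DB : ℝ → ℝ → Ω → ℝ) (Y10 : Ω → ℝ) (K : ℝ) (hK : 0 < K)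
    (hDAm : ∀ z1 z2 : ℝ, (z1 = 0 ∨ z1 = 1) → (z2 = 0 ∨ z2 = 1) → Measurable (DA z1 z2))
    (hDBm : ∀ z1 z2 : ℝ, (z1 = 0 ∨ z1 = 1) → (z2 = 0 ∨ z2 = 1) → Measurable (DB z1 z2))
    (hDAbin : ∀ z1 z2 : ℝ, (z1 = 0 ∨ z1 = 1) → (z2 = 0 ∨ z2 = 1) →
      ∀ ω, DA z1 z2 ω = 0 ∨ DA z1 z2 ω = 1)
    (hDBbin : ∀ z1 z2 : ℝ, (z1 = 0 ∨ z1 = 1) → (z2 = 0 ∨ z2 = 1) →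
      ∀ ω, DB z1 z2 ω = 0 ∨ DB z1 z2 ω = 1)
    (honcA : ∀ z : ℝ, (z = 0 ∨ z = 1) → ∀ ω, DA 0 z ω = 0)
    (honcB : ∀ z : ℝ, (z = 0 ∨ z = 1) → ∀ ω, DB z 0 ω = 0)
    (hnocd : μ {ω | DA 1 0 ω = 1 ∧ DA 1 1 ω = 0} = 0)
    (hY10int : Integrable Y10 μ)
    (hY10bdd : ∀ᵐ ω ∂μ, 0 ≤ Y10 ω ∧ Y10 ω ≤ K)
    (SA JA CA CB : Set Ω)
    (hSA : SA = {ω | DA 1 0 ω = 1}) (hJA : JA = {ω | DA 1 0 ω = 0 ∧ DA 1 1 ω = 1})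
    (hCA : CA = {ω | DA 1 1 ω = 1}) (hCB : CB = {ω | DB 1 1 ω = 1})
    (hcc : 0 < μ (CA ∩ CB)) :
    ((∫ ω in SA, Y10 ω ∂μ) - ∫ ω in CA ∩ CBᶜ, Y10 ω ∂μ) / (μ (CA ∩ CB)).toReal ≤
        cexp μ Y10 (CA ∩ CB) ∧
      cexp μ Y10 (CA ∩ CB) ≤
        ((∫ ω in SA, Y10 ω ∂μ) - (∫ ω in CA ∩ CBᶜ, Y10 ω ∂μ) + K * (μ JA).toReal) /
          (μ (CA ∩ CB)).toReal :=
  stmt_19_general μ DA DB Y10 K hDAm hDBm hDAbin hnocd hY10int hY10bdd SA JA CA CB hSA hJA hCA hCB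
end
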